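/- arXiv:2304.14341 — 3 statements merged into one kernel-verified Lean document; each statement's English description precedes it below -/
import Mathlib

section
/- Let (M,d,ℓ) be a regular Lorentzian geodesic space in which ℓ₋ = max{-ℓ,0} is continuous real-valued and all causal diamonds J(x,y) = J⁺(x) ∩ J⁻(y) are compact. Then every timelike ℓ-path σ : [0,1] → M (satisfying ℓ(σ(s),σ(t)) = (t-s)ℓ(σ(0),σ(1)) ∈ (-∞,0) for all 0 ≤ s < t ≤ 1) is continuous with respect to d. -/
open Set
open scoped ENNReal

/-- The Lorentzian length of a path `σ` over `[a,b]`. -/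
noncomputable def LorLen {M : Type*} (ℓ : M → M → EReal) (σ : ℝ → M) (a b : ℝ) : EReal :=
  sSup {v : EReal | ∃ (N : ℕ) (s : ℕ → ℝ), s 0 = a ∧ s N = b ∧
    (∀ i < N, s i < s (i + 1)) ∧
    v = ∑ i ∈ Finset.range N, ℓ (σ (s i)) (σ (s (i + 1)))}

/-- A (rough, future-directed) causal path on `[0,1]`. -/
def IsCausalPath {M : Type*} (ℓ : M → M → EReal) (σ : ℝ → M) : Prop :=
  ∀ s t : ℝ, 0 ≤ s → s < t → t ≤ 1 → ℓ (σ s) (σ t) ≤ 0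

/-- A causal curve on `[0,1]`: a nonconstant causal path, locally Lipschitz in `d`. -/
def IsCausalCurve {M : Type*} [MetricSpace M] (ℓ : M → M → EReal) (σ : ℝ → M) : Prop :=
  IsCausalPath ℓ σ ∧
  (∀ t ∈ Icc (0:ℝ) 1, ∃ (K : NNReal) (U : Set ℝ), U ∈ nhdsWithin t (Icc (0:ℝ) 1) ∧
    LipschitzOnWith K σ U) ∧
  (∃ s ∈ Icc (0:ℝ) 1, ∃ t ∈ Icc (0:ℝ) 1, σ s ≠ σ t)

/-- An ℓ-curve: a causal curve realizing the time separation of its endpoints. -/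
def IsLCurve {M : Type*} [MetricSpace M] (ℓ : M → M → EReal) (σ : ℝ → M) : Prop :=
  IsCausalCurve ℓ σ ∧ LorLen ℓ σ 0 1 = ℓ (σ 0) (σ 1)

/-- A Lorentzian geodesic space: every pair x ≤ y with x ≠ y is joined by an ℓ-curve. -/
def IsGeodesicSpacetime {M : Type*} [MetricSpace M] (ℓ : M → M → EReal) : Prop :=
  ∀ x y : M, ℓ x y ≤ 0 → x ≠ y →
    ∃ σ : ℝ → M, IsLCurve ℓ σ ∧ σ 0 = x ∧ σ 1 = y

/-- Regularity: an ℓ-curve with timelike separated endpoints has no nonconstant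
null (lightlike) subsegment. -/
def IsRegularSpacetime {M : Type*} [MetricSpace M] (ℓ : M → M → EReal) : Prop :=
  ∀ σ : ℝ → M, IsLCurve ℓ σ → ℓ (σ 0) (σ 1) < 0 →
    ¬∃ c d : ℝ, 0 ≤ c ∧ c < d ∧ d ≤ 1 ∧
      (∀ s t : ℝ, c ≤ s → s < t → t ≤ d → ℓ (σ s) (σ t) = 0) ∧
      (∃ s ∈ Icc c d, σ s ≠ σ c)

set_option linter.unusedSectionVars false
section Aux
variable {M : Type*} (ℓ : M → M → EReal)


lemma ereal_lt_top {e : EReal} (h : e ≤ 0) : e < ⊤ := h.trans_lt EReal.zero_lt_top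

lemma ereal_coe_sum (g : ℕ → ℝ) (N : ℕ) :
    ((∑ i ∈ Finset.range N, g i : ℝ) : EReal) = ∑ i ∈ Finset.range N, ((g i : ℝ) : EReal) := by
  induction N with
  | zero => simp
  | succ n ih => simp [Finset.sum_range_succ, ← ih, EReal.coe_add]

lemma lorLen_ge (γ : ℝ → M) : ℓ (γ 0) (γ 1) ≤ LorLen ℓ γ 0 1 := by
  apply le_sSup
  refine ⟨1, fun i => if i = 0 then 0 else 1, by simp, by simp, ?_, by simp⟩
  intro i hi
  interval_cases i
  norm_num

lemma chain3_le (γ : ℝ → M) {a : ℝ} (h0 : 0 < a) (h1 : a < 1) :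
    ℓ (γ 0) (γ a) + ℓ (γ a) (γ 1) ≤ LorLen ℓ γ 0 1 := by
  apply le_sSup
  refine ⟨2, fun i => if i = 0 then 0 else if i = 1 then a else 1, by simp, by simp, ?_, ?_⟩
  · intro i hi; interval_cases i <;> simp [h0, h1]
  · simp [Finset.sum_range_succ]

lemma chain4_le (γ : ℝ → M) {a b : ℝ} (h0 : 0 < a) (hab : a < b) (h1 : b < 1) :
    ℓ (γ 0) (γ a) + ℓ (γ a) (γ b) + ℓ (γ b) (γ 1) ≤ LorLen ℓ γ 0 1 := by
  apply le_sSup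
  refine ⟨3, fun i => if i = 0 then 0 else if i = 1 then a else if i = 2 then b else 1,
    by simp, by simp, ?_, ?_⟩
  · intro i hi; interval_cases i <;> simp [h0, hab, h1]
  · simp [Finset.sum_range_succ, add_assoc]

/-- The "accumulated length" function along a curve. -/
noncomputable def nf (δ : ℝ → M) (u : ℝ) : ℝ :=
  if u = 0 then 0 else (ℓ (δ 0) (δ u)).toReal

lemma lb (hbot : ∀ x y, ℓ x y ≠ ⊥)
    (htri : ∀ x y z, ℓ x y < ⊤ → ℓ y z < ⊤ → ℓ x z ≤ ℓ x y + ℓ y z)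
    (δ : ℝ → M) (hcaus : ∀ a b : ℝ, 0 ≤ a → a < b → b ≤ 1 → ℓ (δ a) (δ b) ≤ 0)
    (hLor : LorLen ℓ δ 0 1 = ℓ (δ 0) (δ 1)) :
    ∀ a b : ℝ, 0 ≤ a → a < b → b ≤ 1 →
      ℓ (δ a) (δ b) ≤ ((nf ℓ δ b - nf ℓ δ a : ℝ) : EReal) := by
  have coeval : ∀ a b : ℝ, 0 ≤ a → a < b → b ≤ 1 →
      ℓ (δ a) (δ b) = (((ℓ (δ a) (δ b)).toReal : ℝ) : EReal) := fun a b ha hab hb =>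
    (EReal.coe_toReal (ereal_lt_top (hcaus a b ha hab hb)).ne (hbot _ _)).symm
  intro a b ha hab hb
  rcases eq_or_lt_of_le ha with ha' | ha'
  · -- a = 0
    have hb0 : b ≠ 0 := by intro h; rw [h, ← ha'] at hab; exact lt_irrefl 0 hab
    rw [← ha', nf, nf, if_pos rfl, if_neg hb0, sub_zero]
    exact le_of_eq (coeval 0 b le_rfl (ha' ▸ hab) hb)
  · have ha0 : a ≠ 0 := ne_of_gt ha'
    rcases eq_or_lt_of_le hb with hb' | hb'
    · -- b = 1
      subst hb'
      have key := chain3_le ℓ δ ha' hab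
      rw [hLor] at key
      rw [coeval 0 a le_rfl ha' hab.le, coeval a 1 ha hab le_rfl,
        coeval 0 1 le_rfl one_pos le_rfl, ← EReal.coe_add, EReal.coe_le_coe_iff] at key
      rw [coeval a 1 ha hab le_rfl, nf, nf, if_neg one_ne_zero, if_neg ha0,
        EReal.coe_le_coe_iff]
      linarith
    · -- b < 1
      have key := chain4_le ℓ δ ha' hab hb'
      rw [hLor] at key
      have t1 := htri (δ 0) (δ b) (δ 1)
        (ereal_lt_top (hcaus 0 b le_rfl (ha'.trans hab) hb))
        (ereal_lt_top (hcaus b 1 (ha.trans hab.le) hb' le_rfl))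
      have key2 : ℓ (δ 0) (δ a) + ℓ (δ a) (δ b) + ℓ (δ b) (δ 1)
          ≤ ℓ (δ 0) (δ b) + ℓ (δ b) (δ 1) := key.trans t1
      rw [coeval 0 a le_rfl ha' (hab.le.trans hb), coeval a b ha hab hb,
        coeval b 1 (ha.trans hab.le) hb' le_rfl, coeval 0 b le_rfl (ha'.trans hab) hb,
        ← EReal.coe_add, ← EReal.coe_add, ← EReal.coe_add, EReal.coe_le_coe_iff] at key2
      rw [coeval a b ha hab hb, nf, nf, if_neg (ha'.trans hab).ne', if_neg ha0,
        EReal.coe_le_coe_iff]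
      linarith

/-- Criterion for a curve to realize its endpoint separation. -/
lemma lorlen_eq (γ : ℝ → M) (F : ℝ → ℝ)
    (hbound : ∀ a b : ℝ, 0 ≤ a → a < b → b ≤ 1 → ℓ (γ a) (γ b) ≤ ((F b - F a : ℝ) : EReal))
    (hend : ℓ (γ 0) (γ 1) = ((F 1 - F 0 : ℝ) : EReal)) :
    LorLen ℓ γ 0 1 = ℓ (γ 0) (γ 1) := by
  refine le_antisymm (sSup_le ?_) (lorLen_ge ℓ γ)
  rintro v ⟨N, s, h0, hN, hmono, rfl⟩
  have mono : ∀ j, j ≤ N → ∀ i, i ≤ j → s i ≤ s j := by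
    intro j
    induction j with
    | zero => intro _ i hi; simp [Nat.le_zero.mp hi]
    | succ k ih =>
      intro hk i hi
      rcases Nat.eq_or_lt_of_le hi with h | h
      · rw [h]
      · exact (ih (Nat.le_of_succ_le hk) i (Nat.lt_succ_iff.mp h)).trans (hmono k hk).le
  calc ∑ i ∈ Finset.range N, ℓ (γ (s i)) (γ (s (i + 1)))
      ≤ ∑ i ∈ Finset.range N, ((F (s (i + 1)) - F (s i) : ℝ) : EReal) := by
        apply Finset.sum_le_sum
        intro i hi
        have hi' := Finset.mem_range.mp hi
        exact hbound (s i) (s (i + 1)) (h0 ▸ mono i hi'.le 0 (Nat.zero_le i))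
          (hmono i hi') (hN ▸ mono N le_rfl (i + 1) hi')
    _ = ((∑ i ∈ Finset.range N, (F (s (i + 1)) - F (s i)) : ℝ) : EReal) :=
        (ereal_coe_sum _ _).symm
    _ = ((F (s N) - F (s 0) : ℝ) : EReal) := by
        rw [Finset.sum_range_sub (fun i => F (s i))]
    _ = ℓ (γ 0) (γ 1) := by rw [h0, hN, hend]

/-- On a null causal path realizing zero separation, all intermediate separations vanish. -/
lemma null_segment
    (htri : ∀ x y z, ℓ x y < ⊤ → ℓ y z < ⊤ → ℓ x z ≤ ℓ x y + ℓ y z)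
    (δ : ℝ → M) (hcaus : ∀ a b : ℝ, 0 ≤ a → a < b → b ≤ 1 → ℓ (δ a) (δ b) ≤ 0)
    (h0 : ℓ (δ 0) (δ 1) = 0) :
    ∀ a b : ℝ, 0 ≤ a → a < b → b ≤ 1 → ℓ (δ a) (δ b) = 0 := by
  intro a b ha hab hb
  refine le_antisymm (hcaus a b ha hab hb) ?_
  rcases eq_or_lt_of_le ha with ha' | ha' <;> rcases eq_or_lt_of_le hb with hb' | hb'
  · rw [← ha', hb', h0]
  · -- a = 0, b < 1
    have t1 := htri (δ 0) (δ b) (δ 1) (ereal_lt_top (hcaus 0 b le_rfl (ha' ▸ hab) hb))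
      (ereal_lt_top (hcaus b 1 (ha'.le.trans hab.le) hb' le_rfl))
    have h2 : ℓ (δ 0) (δ b) + ℓ (δ b) (δ 1) ≤ ℓ (δ 0) (δ b) + 0 :=
      add_le_add le_rfl (hcaus b 1 (ha'.le.trans hab.le) hb' le_rfl)
    rw [← ha']
    calc (0 : EReal) = ℓ (δ 0) (δ 1) := h0.symm
    _ ≤ ℓ (δ 0) (δ b) + 0 := t1.trans h2
    _ = ℓ (δ 0) (δ b) := add_zero _
  · -- 0 < a, b = 1
    have t1 := htri (δ 0) (δ a) (δ 1) (ereal_lt_top (hcaus 0 a le_rfl ha' (hab.le.trans hb)))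
      (ereal_lt_top (hcaus a 1 ha'.le (hb' ▸ hab) le_rfl))
    have h2 : ℓ (δ 0) (δ a) + ℓ (δ a) (δ 1) ≤ 0 + ℓ (δ a) (δ 1) :=
      add_le_add (hcaus 0 a le_rfl ha' (hab.le.trans hb)) le_rfl
    rw [hb']
    calc (0 : EReal) = ℓ (δ 0) (δ 1) := h0.symm
    _ ≤ 0 + ℓ (δ a) (δ 1) := t1.trans h2
    _ = ℓ (δ a) (δ 1) := zero_add _
  · -- 0 < a, b < 1
    have c0a := hcaus 0 a le_rfl ha' (hab.le.trans hb'.le)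
    have cab := hcaus a b ha hab hb
    have cb1 := hcaus b 1 (ha.trans hab.le) hb' le_rfl
    have ca1 := hcaus a 1 ha (hab.trans hb') le_rfl
    have t1 := htri (δ 0) (δ a) (δ 1) (ereal_lt_top c0a) (ereal_lt_top ca1)
    have t2 := htri (δ a) (δ b) (δ 1) (ereal_lt_top cab) (ereal_lt_top cb1)
    calc (0 : EReal) = ℓ (δ 0) (δ 1) := h0.symm
    _ ≤ ℓ (δ 0) (δ a) + ℓ (δ a) (δ 1) := t1
    _ ≤ ℓ (δ 0) (δ a) + (ℓ (δ a) (δ b) + ℓ (δ b) (δ 1)) := add_le_add le_rfl t2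
    _ ≤ 0 + (ℓ (δ a) (δ b) + 0) := add_le_add c0a (add_le_add le_rfl cb1)
    _ = ℓ (δ a) (δ b) := by rw [add_zero, zero_add]

lemma self_not_neg
    (htri : ∀ x y z, ℓ x y < ⊤ → ℓ y z < ⊤ → ℓ x z ≤ ℓ x y + ℓ y z)
    (hbot : ∀ x y, ℓ x y ≠ ⊥) (x : M) : ¬ ℓ x x < 0 := by
  intro h
  have hne : ℓ x x ≠ ⊤ := (ereal_lt_top h.le).ne
  have hc : ℓ x x = ((ℓ x x).toReal : EReal) := (EReal.coe_toReal hne (hbot x x)).symm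
  have t := htri x x x (ereal_lt_top h.le) (ereal_lt_top h.le)
  rw [hc, ← EReal.coe_add, EReal.coe_le_coe_iff] at t
  have : (ℓ x x).toReal < 0 := by
    rw [hc, ← EReal.coe_zero, EReal.coe_lt_coe_iff] at h; exact h
  linarith


end Aux

set_option maxHeartbeats 1000000

section Concat2
variable {M : Type*} [MetricSpace M] (ℓ : M → M → EReal)



/-- Concatenation of two paths, traversing each at double speed. -/
noncomputable def concatP (γ₁ γ₂ : ℝ → M) : ℝ → M :=
  fun u => if u ≤ 1/2 then γ₁ (2*u) else γ₂ (2*u - 1)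

lemma concatP_left (γ₁ γ₂ : ℝ → M) {u : ℝ} (h : u ≤ 1/2) :
    concatP γ₁ γ₂ u = γ₁ (2*u) := if_pos h

lemma concatP_right (γ₁ γ₂ : ℝ → M) (hy : γ₁ 1 = γ₂ 0) {u : ℝ} (h : 1/2 ≤ u) :
    concatP γ₁ γ₂ u = γ₂ (2*u - 1) := by
  rcases eq_or_lt_of_le h with h' | h'
  · subst h'
    rw [concatP]
    norm_num [hy]
  · rw [concatP, if_neg (not_le.mpr h')]

/-- The concatenation is locally Lipschitz. -/
lemma concatP_lip (γ₁ γ₂ : ℝ → M) (hy : γ₁ 1 = γ₂ 0)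
    (h1 : ∀ t ∈ Icc (0:ℝ) 1, ∃ (K : NNReal) (U : Set ℝ), U ∈ nhdsWithin t (Icc (0:ℝ) 1) ∧
      LipschitzOnWith K γ₁ U)
    (h2 : ∀ t ∈ Icc (0:ℝ) 1, ∃ (K : NNReal) (U : Set ℝ), U ∈ nhdsWithin t (Icc (0:ℝ) 1) ∧
      LipschitzOnWith K γ₂ U) :
    ∀ t ∈ Icc (0:ℝ) 1, ∃ (K : NNReal) (U : Set ℝ), U ∈ nhdsWithin t (Icc (0:ℝ) 1) ∧
      LipschitzOnWith K (concatP γ₁ γ₂) U := by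
  intro t ht
  rcases lt_trichotomy t (1/2) with htl | hteq | htr
  · -- t < 1/2
    obtain ⟨K₁, U₁, hU₁, hlip₁⟩ := h1 (2*t) ⟨by linarith [ht.1], by linarith⟩
    have hmap : MapsTo (fun u : ℝ => 2*u) (Icc 0 1 ∩ Iio (1/2)) (Icc 0 1) := by
      rintro u ⟨⟨hu0, hu1⟩, hu2⟩
      simp only [mem_Iio] at hu2
      exact ⟨by dsimp only; linarith, by dsimp only; linarith⟩
    have htd : Filter.Tendsto (fun u : ℝ => 2*u) (nhdsWithin t (Icc 0 1 ∩ Iio (1/2)))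
        (nhdsWithin (2*t) (Icc 0 1)) :=
      ((continuous_const.mul continuous_id).continuousWithinAt).tendsto_nhdsWithin hmap
    have hfe : nhdsWithin t (Icc 0 1 ∩ Iio (1/2)) = nhdsWithin t (Icc (0:ℝ) 1) := by
      rw [nhdsWithin_inter, (isOpen_Iio).nhdsWithin_eq htl, inf_eq_left]
      exact nhdsWithin_le_nhds
    refine ⟨2*K₁, (fun u : ℝ => 2*u) ⁻¹' U₁ ∩ (Icc 0 1 ∩ Iio (1/2)), ?_, ?_⟩
    · rw [← hfe]
      exact Filter.inter_mem (htd hU₁) self_mem_nhdsWithin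
    · apply LipschitzOnWith.of_dist_le_mul
      rintro u ⟨hu, ⟨_, hu2⟩⟩ v ⟨hv, ⟨_, hv2⟩⟩
      simp only [mem_Iio] at hu2 hv2
      rw [concatP_left _ _ hu2.le, concatP_left _ _ hv2.le]
      have := hlip₁.dist_le_mul _ hu _ hv
      have hd : dist (2*u) (2*v) = 2 * dist u v := by
        simp [Real.dist_eq, ← mul_sub, abs_mul]
      push_cast
      rw [hd] at this
      linarith
  · -- t = 1/2
    obtain ⟨K₁, U₁, hU₁, hlip₁⟩ := h1 1 (by norm_num : (1:ℝ) ∈ Icc (0:ℝ) 1)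
    obtain ⟨K₂, U₂, hU₂, hlip₂⟩ := h2 0 (by norm_num : (0:ℝ) ∈ Icc (0:ℝ) 1)
    have h1U : (1:ℝ) ∈ U₁ := mem_of_mem_nhdsWithin (by norm_num : (1:ℝ) ∈ Icc (0:ℝ) 1) hU₁
    have h0U : (0:ℝ) ∈ U₂ := mem_of_mem_nhdsWithin (by norm_num : (0:ℝ) ∈ Icc (0:ℝ) 1) hU₂
    set A : Set ℝ := (fun u : ℝ => 2*u) ⁻¹' U₁ ∩ Icc 0 (1/2) with hA
    set B : Set ℝ := (fun u : ℝ => 2*u - 1) ⁻¹' U₂ ∩ Icc (1/2) 1 with hB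
    refine ⟨2*K₁ + 2*K₂, A ∪ B, ?_, ?_⟩
    · subst hteq
      have hsplit : Icc (0:ℝ) 1 = Icc (0:ℝ) (1/2) ∪ Icc (1/2 : ℝ) 1 :=
        (Icc_union_Icc_eq_Icc (by norm_num) (by norm_num)).symm
      rw [hsplit, nhdsWithin_union, Filter.mem_sup]
      constructor
      · apply Filter.mem_of_superset _ subset_union_left
        have hmap : MapsTo (fun u : ℝ => 2*u) (Icc 0 (1/2)) (Icc (0:ℝ) 1) := by
          rintro u ⟨hu0, hu1⟩; exact ⟨by dsimp only; linarith, by dsimp only; linarith⟩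
        have htd : Filter.Tendsto (fun u : ℝ => 2*u) (nhdsWithin (1/2) (Icc 0 (1/2)))
            (nhdsWithin (2*(1/2 : ℝ)) (Icc (0:ℝ) 1)) :=
          ((continuous_const.mul continuous_id).continuousWithinAt).tendsto_nhdsWithin hmap
        rw [show 2*(1/2:ℝ) = 1 by norm_num] at htd
        exact Filter.inter_mem (htd hU₁) self_mem_nhdsWithin
      · apply Filter.mem_of_superset _ subset_union_right
        have hmap : MapsTo (fun u : ℝ => 2*u - 1) (Icc (1/2) 1) (Icc (0:ℝ) 1) := by
          rintro u ⟨hu0, hu1⟩; exact ⟨by dsimp only; linarith, by dsimp only; linarith⟩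
        have htd : Filter.Tendsto (fun u : ℝ => 2*u - 1) (nhdsWithin (1/2) (Icc (1/2) 1))
            (nhdsWithin (2*(1/2 : ℝ) - 1) (Icc (0:ℝ) 1)) :=
          (((continuous_const.mul continuous_id).sub continuous_const).continuousWithinAt).tendsto_nhdsWithin hmap
        rw [show 2*(1/2:ℝ) - 1 = 0 by norm_num] at htd
        exact Filter.inter_mem (htd hU₂) self_mem_nhdsWithin
    · apply LipschitzOnWith.of_dist_le_mul
      have key : ∀ u ∈ A ∪ B, ∀ v ∈ A ∪ B, u ≤ v →
          dist (concatP γ₁ γ₂ u) (concatP γ₁ γ₂ v) ≤ (2*(K₁:ℝ) + 2*(K₂:ℝ)) * dist u v := by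
        rintro u (⟨hu, hu0, hu2⟩ | ⟨hu, hu2, hu1⟩) v (⟨hv, hv0, hv2⟩ | ⟨hv, hv2, hv1⟩) huv
        · -- both in A
          rw [concatP_left _ _ hu2, concatP_left _ _ hv2]
          have := hlip₁.dist_le_mul _ hu _ hv
          have hd : dist (2*u) (2*v) = 2 * dist u v := by
            simp [Real.dist_eq, ← mul_sub, abs_mul]
          rw [hd] at this
          have hnn : (0:ℝ) ≤ K₂ := K₂.2
          have hdnn : (0:ℝ) ≤ dist u v := dist_nonneg
          nlinarith
        · -- u ∈ A, v ∈ B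
          rw [concatP_left _ _ hu2, concatP_right _ _ hy hv2]
          have hd1 : dist (γ₁ (2*u)) (γ₁ 1) ≤ (K₁:ℝ) * dist (2*u) 1 :=
            hlip₁.dist_le_mul _ hu _ h1U
          have hd2 : dist (γ₂ 0) (γ₂ (2*v - 1)) ≤ (K₂:ℝ) * dist 0 (2*v - 1) :=
            hlip₂.dist_le_mul _ h0U _ hv
          have e1 : dist (2*u) 1 = 1 - 2*u := by
            rw [Real.dist_eq, abs_of_nonpos (by linarith)]; ring
          have e2 : dist (0:ℝ) (2*v - 1) = 2*v - 1 := by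
            rw [Real.dist_eq, abs_of_nonpos (by linarith)]; ring
          have e3 : dist u v = v - u := by
            rw [Real.dist_eq, abs_of_nonpos (by linarith)]; ring
          have tri : dist (γ₁ (2*u)) (γ₂ (2*v - 1)) ≤
              dist (γ₁ (2*u)) (γ₁ 1) + dist (γ₂ 0) (γ₂ (2*v - 1)) := by
            calc dist (γ₁ (2*u)) (γ₂ (2*v - 1)) ≤
                dist (γ₁ (2*u)) (γ₁ 1) + dist (γ₁ 1) (γ₂ (2*v - 1)) := dist_triangle _ _ _
            _ = dist (γ₁ (2*u)) (γ₁ 1) + dist (γ₂ 0) (γ₂ (2*v - 1)) := by rw [hy]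
          have hK1 : (0:ℝ) ≤ K₁ := K₁.2
          have hK2 : (0:ℝ) ≤ K₂ := K₂.2
          rw [e1] at hd1; rw [e2] at hd2; rw [e3]
          nlinarith
        · -- u ∈ B, v ∈ A : forces u = v
          have : u = v := le_antisymm huv (hv2.trans hu2)
          rw [this, dist_self]
          positivity
        · -- both in B
          rw [concatP_right _ _ hy hu2, concatP_right _ _ hy hv2]
          have := hlip₂.dist_le_mul _ hu _ hv
          have hd : dist (2*u - 1) (2*v - 1) = 2 * dist u v := by
            rw [Real.dist_eq, Real.dist_eq, show 2*u-1-(2*v-1) = 2*(u-v) by ring, abs_mul]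
            norm_num
          rw [hd] at this
          have hnn : (0:ℝ) ≤ K₁ := K₁.2
          have hdnn : (0:ℝ) ≤ dist u v := dist_nonneg
          nlinarith
      intro u hu v hv
      push_cast
      rcases le_total u v with h | h
      · exact key u hu v hv h
      · rw [dist_comm, dist_comm u v]
        exact key v hv u hu h
  · -- t > 1/2
    obtain ⟨K₂, U₂, hU₂, hlip₂⟩ := h2 (2*t - 1) ⟨by linarith, by linarith [ht.2]⟩
    have hmap : MapsTo (fun u : ℝ => 2*u - 1) (Icc 0 1 ∩ Ioi (1/2)) (Icc 0 1) := by
      rintro u ⟨⟨hu0, hu1⟩, hu2⟩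
      simp only [mem_Ioi] at hu2
      exact ⟨by dsimp only; linarith, by dsimp only; linarith⟩
    have htd : Filter.Tendsto (fun u : ℝ => 2*u - 1) (nhdsWithin t (Icc 0 1 ∩ Ioi (1/2)))
        (nhdsWithin (2*t - 1) (Icc 0 1)) :=
      (((continuous_const.mul continuous_id).sub continuous_const).continuousWithinAt).tendsto_nhdsWithin hmap
    have hfe : nhdsWithin t (Icc 0 1 ∩ Ioi (1/2)) = nhdsWithin t (Icc (0:ℝ) 1) := by
      rw [nhdsWithin_inter, (isOpen_Ioi).nhdsWithin_eq htr, inf_eq_left]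
      exact nhdsWithin_le_nhds
    refine ⟨2*K₂, (fun u : ℝ => 2*u - 1) ⁻¹' U₂ ∩ (Icc 0 1 ∩ Ioi (1/2)), ?_, ?_⟩
    · rw [← hfe]
      exact Filter.inter_mem (htd hU₂) self_mem_nhdsWithin
    · apply LipschitzOnWith.of_dist_le_mul
      rintro u ⟨hu, ⟨_, hu2⟩⟩ v ⟨hv, ⟨_, hv2⟩⟩
      simp only [mem_Ioi] at hu2 hv2
      rw [concatP_right _ _ hy hu2.le, concatP_right _ _ hy hv2.le]
      have := hlip₂.dist_le_mul _ hu _ hv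
      have hd : dist (2*u - 1) (2*v - 1) = 2 * dist u v := by
        rw [Real.dist_eq, Real.dist_eq, show 2*u-1-(2*v-1) = 2*(u-v) by ring, abs_mul]
        norm_num
      push_cast
      rw [hd] at this
      linarith


/-- Concatenating two ℓ-curves whose separations add yields an ℓ-curve. -/
lemma concat_lcurve (hbot : ∀ x y, ℓ x y ≠ ⊥)
    (htri : ∀ x y z, ℓ x y < ⊤ → ℓ y z < ⊤ → ℓ x z ≤ ℓ x y + ℓ y z)
    {γ₁ γ₂ : ℝ → M} (h1 : IsLCurve ℓ γ₁) (h2 : IsLCurve ℓ γ₂) (hy : γ₁ 1 = γ₂ 0)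
    (hadd : ℓ (γ₁ 0) (γ₂ 1) = ℓ (γ₁ 0) (γ₁ 1) + ℓ (γ₂ 0) (γ₂ 1)) :
    IsLCurve ℓ (concatP γ₁ γ₂) := by
  have hc1 : IsCausalPath ℓ γ₁ := h1.1.1
  have hc2 : IsCausalPath ℓ γ₂ := h2.1.1
  have hΓ0 : concatP γ₁ γ₂ 0 = γ₁ 0 := by
    rw [concatP_left _ _ (by norm_num : (0:ℝ) ≤ 1/2), mul_zero]
  have hΓ1 : concatP γ₁ γ₂ 1 = γ₂ 1 := by
    rw [concatP_right _ _ hy (by norm_num : (1/2:ℝ) ≤ 1)]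
    norm_num
  -- causal path
  have hcaus : IsCausalPath ℓ (concatP γ₁ γ₂) := by
    intro s t hs hst ht
    rcases le_or_gt t (1/2) with h | h
    · rw [concatP_left _ _ (hst.le.trans h), concatP_left _ _ h]
      exact hc1 (2*s) (2*t) (by linarith) (by linarith) (by linarith)
    · rcases le_or_gt (1/2) s with h' | h'
      · rw [concatP_right _ _ hy h', concatP_right _ _ hy (h'.trans hst.le)]
        exact hc2 (2*s - 1) (2*t - 1) (by linarith) (by linarith) (by linarith)
      · rw [concatP_left _ _ h'.le, concatP_right _ _ hy h.le]
        have e1 : ℓ (γ₁ (2*s)) (γ₁ 1) ≤ 0 := hc1 (2*s) 1 (by linarith) (by linarith) le_rfl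
        have e2 : ℓ (γ₂ 0) (γ₂ (2*t - 1)) ≤ 0 := hc2 0 (2*t - 1) le_rfl (by linarith) (by linarith)
        have e1' : ℓ (γ₁ (2*s)) (γ₂ 0) ≤ 0 := by rw [← hy]; exact e1
        have tri := htri (γ₁ (2*s)) (γ₂ 0) (γ₂ (2*t - 1)) (ereal_lt_top e1')
          (ereal_lt_top e2)
        calc ℓ (γ₁ (2*s)) (γ₂ (2*t - 1)) ≤ ℓ (γ₁ (2*s)) (γ₂ 0) + ℓ (γ₂ 0) (γ₂ (2*t - 1)) := tri
        _ ≤ 0 + 0 := add_le_add e1' e2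
        _ = 0 := add_zero 0
  refine ⟨⟨hcaus, concatP_lip γ₁ γ₂ hy h1.1.2.1 h2.1.2.1, ?_⟩, ?_⟩
  · -- nonconstant
    obtain ⟨s, hs, t, ht, hne⟩ := h1.1.2.2
    refine ⟨s/2, ⟨by linarith [hs.1], by linarith [hs.2]⟩,
      t/2, ⟨by linarith [ht.1], by linarith [ht.2]⟩, ?_⟩
    rw [concatP_left _ _ (by linarith [hs.2]), concatP_left _ _ (by linarith [ht.2])]
    rw [show 2*(s/2) = s by ring, show 2*(t/2) = t by ring]
    exact hne
  · -- realizes the separation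
    have fin1 : ℓ (γ₁ 0) (γ₁ 1) = (((ℓ (γ₁ 0) (γ₁ 1)).toReal : ℝ) : EReal) :=
      (EReal.coe_toReal (ereal_lt_top (hc1 0 1 le_rfl one_pos le_rfl)).ne (hbot _ _)).symm
    have fin2 : ℓ (γ₂ 0) (γ₂ 1) = (((ℓ (γ₂ 0) (γ₂ 1)).toReal : ℝ) : EReal) :=
      (EReal.coe_toReal (ereal_lt_top (hc2 0 1 le_rfl one_pos le_rfl)).ne (hbot _ _)).symm
    set F : ℝ → ℝ := fun u => nf ℓ γ₁ (min (2*u) 1) + nf ℓ γ₂ (max (2*u - 1) 0) with hF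
    have lb1 := lb ℓ hbot htri γ₁ hc1 h1.2
    have lb2 := lb ℓ hbot htri γ₂ hc2 h2.2
    have hF0 : F 0 = 0 := by
      simp [hF, nf, min_eq_left (by norm_num : 2*(0:ℝ) ≤ 1),
        max_eq_right (by norm_num : 2*(0:ℝ) - 1 ≤ 0)]
    have hF1 : F 1 = (ℓ (γ₁ 0) (γ₁ 1)).toReal + (ℓ (γ₂ 0) (γ₂ 1)).toReal := by
      rw [hF]
      dsimp only
      rw [min_eq_right (by norm_num : (1:ℝ) ≤ 2*1), max_eq_left (by norm_num : (0:ℝ) ≤ 2*1 - 1),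
        show (2:ℝ)*1 - 1 = 1 by norm_num]
      rw [nf, nf, if_neg one_ne_zero, if_neg one_ne_zero]
    have hFleft : ∀ u : ℝ, u ≤ 1/2 → F u = nf ℓ γ₁ (2*u) := by
      intro u hu
      rw [hF]
      dsimp only
      rw [min_eq_left (by linarith), max_eq_right (by linarith),
        show nf ℓ γ₂ 0 = 0 by simp [nf], add_zero]
    have hFright : ∀ u : ℝ, 1/2 ≤ u → F u = nf ℓ γ₁ 1 + nf ℓ γ₂ (2*u - 1) := by
      intro u hu
      rw [hF]
      dsimp only
      rw [min_eq_right (by linarith), max_eq_left (by linarith)]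
    apply lorlen_eq ℓ (concatP γ₁ γ₂) F
    · -- the bound
      intro a b ha hab hb
      rcases le_or_gt b (1/2) with h | h
      · rw [concatP_left _ _ (hab.le.trans h), concatP_left _ _ h, hFleft a (hab.le.trans h),
          hFleft b h]
        exact lb1 (2*a) (2*b) (by linarith) (by linarith) (by linarith)
      · rcases le_or_gt (1/2) a with h' | h'
        · rw [concatP_right _ _ hy h', concatP_right _ _ hy (h'.trans hab.le),
            hFright a h', hFright b (h'.trans hab.le)]
          have := lb2 (2*a - 1) (2*b - 1) (by linarith) (by linarith) (by linarith)
          convert this using 2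
          ring
        · rw [concatP_left _ _ h'.le, concatP_right _ _ hy h.le, hFleft a h'.le, hFright b h.le]
          have e1 : ℓ (γ₁ (2*a)) (γ₁ 1) ≤ 0 := hc1 (2*a) 1 (by linarith) (by linarith) le_rfl
          have e2 : ℓ (γ₂ 0) (γ₂ (2*b - 1)) ≤ 0 :=
            hc2 0 (2*b - 1) le_rfl (by linarith) (by linarith)
          have e1' : ℓ (γ₁ (2*a)) (γ₂ 0) ≤ 0 := by rw [← hy]; exact e1
          have tri : ℓ (γ₁ (2*a)) (γ₂ (2*b - 1)) ≤
              ℓ (γ₁ (2*a)) (γ₁ 1) + ℓ (γ₂ 0) (γ₂ (2*b - 1)) := by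
            rw [hy]
            exact htri (γ₁ (2*a)) (γ₂ 0) (γ₂ (2*b - 1)) (ereal_lt_top e1') (ereal_lt_top e2)
          have b1 := lb1 (2*a) 1 (by linarith) (by linarith) le_rfl
          have b2 := lb2 0 (2*b - 1) le_rfl (by linarith) (by linarith)
          have hnf20 : nf ℓ γ₂ 0 = 0 := by simp [nf]
          rw [hnf20, sub_zero] at b2
          calc ℓ (γ₁ (2*a)) (γ₂ (2*b - 1))
              ≤ ℓ (γ₁ (2*a)) (γ₁ 1) + ℓ (γ₂ 0) (γ₂ (2*b - 1)) := tri
          _ ≤ ((nf ℓ γ₁ 1 - nf ℓ γ₁ (2*a) : ℝ) : EReal) + ((nf ℓ γ₂ (2*b - 1) : ℝ) : EReal) :=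
              add_le_add b1 b2
          _ = ((nf ℓ γ₁ 1 + nf ℓ γ₂ (2*b - 1) - nf ℓ γ₁ (2*a) : ℝ) : EReal) := by
              rw [← EReal.coe_add]
              congr 1
              ring
    · -- the endpoints
      rw [hΓ0, hΓ1, hadd, hF1, hF0, sub_zero, EReal.coe_add, ← fin1, ← fin2]

end Concat2
section Main
variable {M : Type*} [MetricSpace M] (ℓ : M → M → EReal)

open Filter Topology

lemma ereal_coe_max (a b : ℝ) : ((max a b : ℝ) : EReal) = max (a : EReal) (b : EReal) :=
  EReal.coe_strictMono.monotone.map_max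

lemma lminus_limit (hcont : Continuous fun p : M × M => max (-(ℓ p.1 p.2)) 0)
    {x y : ℕ → M} {X Y : M} (hx : Tendsto x atTop (𝓝 X)) (hy : Tendsto y atTop (𝓝 Y))
    {r : ℕ → ℝ} {c : ℝ} (hvl : ∀ n, ℓ (x n) (y n) = ((r n : ℝ) : EReal))
    (hr : Tendsto r atTop (𝓝 c)) :
    max (-(ℓ X Y)) 0 = ((max (-c) 0 : ℝ) : EReal) := by
  have h1 : Tendsto (fun n => max (-(ℓ (x n) (y n))) 0) atTop (𝓝 (max (-(ℓ X Y)) 0)) :=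
    (hcont.tendsto (X, Y)).comp (hx.prodMk_nhds hy)
  have h2 : Tendsto (fun n => max (-(ℓ (x n) (y n))) 0) atTop
      (𝓝 ((max (-c) 0 : ℝ) : EReal)) := by
    have he : (fun n => max (-(ℓ (x n) (y n))) 0) = fun n => ((max (-(r n)) 0 : ℝ) : EReal) := by
      funext n
      simp only [hvl n, ereal_coe_max, EReal.coe_neg, EReal.coe_zero]
    rw [he]
    exact EReal.tendsto_coe.mpr ((hr.neg).max tendsto_const_nhds)
  exact tendsto_nhds_unique h1 h2

lemma lminus_eq_zero {A : EReal} (h : max (-A) 0 = 0) (hA : A ≤ 0) : A = 0 := by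
  have h1 : -A ≤ 0 := le_of_le_of_eq (le_max_left _ _) h
  have h2 : -(0:EReal) ≤ -A := EReal.neg_le_neg_iff.mpr hA
  rw [neg_zero] at h2
  have : -A = 0 := le_antisymm h1 h2
  rw [← neg_neg A, this, neg_zero]

lemma lminus_eq_coe {A : EReal} {c : ℝ} (h : max (-A) 0 = ((c : ℝ) : EReal)) (hc : 0 < c) :
    A = ((-c : ℝ) : EReal) := by
  rcases max_choice (-A) 0 with h' | h'
  · have : -A = ((c : ℝ) : EReal) := h'.symm.trans h
    rw [← neg_neg A, this, ← EReal.coe_neg]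
  · exfalso
    have : (0 : EReal) = ((c : ℝ) : EReal) := h'.symm.trans h
    exact hc.ne' (EReal.coe_eq_zero.mp this.symm)

end Main

open Filter Topology

/-- in a regular Lorentzian geodesic space with ℓ₋ continuous
real-valued and compact causal diamonds, every timelike ℓ-path is d-continuous. -/
theorem stmt11 {M : Type*} [MetricSpace M] (ℓ : M → M → EReal)
    (hrange : ∀ x y, ℓ x y ≤ 0 ∨ ℓ x y = ⊤)
    (hrefl : ∀ x, ℓ x x ≤ 0)
    (htri : ∀ x y z, ℓ x y < ⊤ → ℓ y z < ⊤ → ℓ x z ≤ ℓ x y + ℓ y z)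
    (hfin : ∀ x y, max (-(ℓ x y)) 0 ≠ ⊤)
    (hcont : Continuous fun p : M × M => max (-(ℓ p.1 p.2)) 0)
    (hgeo : IsGeodesicSpacetime ℓ)
    (hreg : IsRegularSpacetime ℓ)
    (hdiamond : ∀ x y : M, IsCompact ({z | ℓ x z ≤ 0} ∩ {z | ℓ z y ≤ 0}))
    (σ : ℝ → M)
    (hT : ℓ (σ 0) (σ 1) < 0)
    (hpath : ∀ s t : ℝ, 0 ≤ s → s < t → t ≤ 1 →
      ℓ (σ s) (σ t) = ((t - s : ℝ) : EReal) * ℓ (σ 0) (σ 1)) :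
    ContinuousOn σ (Icc (0:ℝ) 1) := by
  have hbot : ∀ x y, ℓ x y ≠ ⊥ := by
    intro x y h
    apply hfin x y
    rw [h, EReal.neg_bot]
    exact max_eq_left le_top
  set Lr : ℝ := (ℓ (σ 0) (σ 1)).toReal with hLrdef
  have hLne : ℓ (σ 0) (σ 1) = ((Lr : ℝ) : EReal) :=
    (EReal.coe_toReal (ereal_lt_top hT.le).ne (hbot _ _)).symm
  have hLr0 : Lr < 0 := by
    rw [hLne, ← EReal.coe_zero, EReal.coe_lt_coe_iff] at hT
    exact hT
  have hval : ∀ s t : ℝ, 0 ≤ s → s < t → t ≤ 1 →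
      ℓ (σ s) (σ t) = (((t - s) * Lr : ℝ) : EReal) := by
    intro s t hs hst ht
    rw [hpath s t hs hst ht, hLne, ← EReal.coe_mul]
  have fact1 : ∀ s t : ℝ, 0 ≤ s → s ≤ t → t ≤ 1 → ℓ (σ s) (σ t) ≤ 0 := by
    intro s t hs hst ht
    rcases eq_or_lt_of_le hst with h | h
    · rw [h]; exact hrefl _
    · rw [hval s t hs h ht, ← EReal.coe_zero, EReal.coe_le_coe_iff]
      nlinarith
  intro t₀ ht₀
  refine Filter.tendsto_iff_seq_tendsto.mpr ?_
  intro u hu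
  by_contra hnot
  have humem : ∀ᶠ n in atTop, u n ∈ Icc (0:ℝ) 1 := hu self_mem_nhdsWithin
  have hut : Tendsto u atTop (𝓝 t₀) := hu.mono_right nhdsWithin_le_nhds
  rw [Metric.tendsto_atTop] at hnot
  push_neg at hnot
  obtain ⟨ε, hε, hfr⟩ := hnot
  have hfr' : ∃ᶠ n in atTop, ε ≤ dist (σ (u n)) (σ t₀) ∧ u n ∈ Icc (0:ℝ) 1 :=
    (Filter.frequently_atTop.mpr hfr).and_eventually humem
  obtain ⟨φ, hφ, hφP⟩ := Filter.extraction_of_frequently_atTop hfr'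
  have hmem : ∀ n, σ (u (φ n)) ∈ ({z | ℓ (σ 0) z ≤ 0} ∩ {z | ℓ z (σ 1) ≤ 0}) := fun n =>
    ⟨fact1 0 (u (φ n)) le_rfl (hφP n).2.1 (hφP n).2.2,
     fact1 (u (φ n)) 1 (hφP n).2.1 (hφP n).2.2 le_rfl⟩
  obtain ⟨z, hzD, ψ, hψ, hzconv⟩ := (hdiamond (σ 0) (σ 1)).tendsto_subseq hmem
  set s : ℕ → ℝ := fun n => u (φ (ψ n)) with hsdef
  have hs_t₀ : Tendsto s atTop (𝓝 t₀) := hut.comp ((hφ.comp hψ).tendsto_atTop)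
  have hs_mem : ∀ n, s n ∈ Icc (0:ℝ) 1 := fun n => (hφP (ψ n)).2
  have hs_d : ∀ n, ε ≤ dist (σ (s n)) (σ t₀) := fun n => (hφP (ψ n)).1
  have hs_conv : Tendsto (fun n => σ (s n)) atTop (𝓝 z) := hzconv
  have hzd : ε ≤ dist z (σ t₀) :=
    ge_of_tendsto (hs_conv.dist tendsto_const_nhds) (Eventually.of_forall hs_d)
  have hzne : z ≠ σ t₀ := by
    intro h
    rw [h, dist_self] at hzd
    linarith
  by_cases hside : ∃ᶠ n in atTop, t₀ < s n
  · -- approach from the right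
    have ht₀1 : t₀ < 1 := by
      obtain ⟨n₀, hn₀⟩ := hside.exists
      exact lt_of_lt_of_le hn₀ (hs_mem n₀).2
    have hev : ∀ᶠ n in atTop, s n < 1 := hs_t₀.eventually_lt_const ht₀1
    obtain ⟨ρ, hρ, hρP⟩ := Filter.extraction_of_frequently_atTop (hside.and_eventually hev)
    set w : ℕ → ℝ := fun n => s (ρ n) with hwdef
    have hw_t₀ : Tendsto w atTop (𝓝 t₀) := hs_t₀.comp hρ.tendsto_atTop
    have hw_conv : Tendsto (fun n => σ (w n)) atTop (𝓝 z) := hs_conv.comp hρ.tendsto_atTop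
    have hwgt : ∀ n, t₀ < w n := fun n => (hρP n).1
    have hwlt : ∀ n, w n < 1 := fun n => (hρP n).2
    have hw0 : ∀ n, 0 ≤ w n := fun n => (hs_mem (ρ n)).1
    -- ℓ (σ t₀) z ≤ 0 by closedness of the diamond J(σ t₀, σ 1)
    have hA_le : ℓ (σ t₀) z ≤ 0 := by
      have hzmem : z ∈ ({y | ℓ (σ t₀) y ≤ 0} ∩ {y | ℓ y (σ 1) ≤ 0}) :=
        (hdiamond (σ t₀) (σ 1)).isClosed.mem_of_tendsto hw_conv
          (Eventually.of_forall fun n =>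
            ⟨fact1 t₀ (w n) ht₀.1 (hwgt n).le (hwlt n).le,
             fact1 (w n) 1 (hw0 n) (hwlt n).le le_rfl⟩)
      exact hzmem.1
    have hA : ℓ (σ t₀) z = 0 := by
      have hr : Tendsto (fun n => (w n - t₀) * Lr) atTop (𝓝 0) := by
        have := (hw_t₀.sub_const t₀).mul_const Lr
        simpa using this
      have hlim := lminus_limit ℓ hcont (tendsto_const_nhds : Tendsto (fun _ : ℕ => σ t₀) atTop (𝓝 (σ t₀)))
        hw_conv (fun n => hval t₀ (w n) ht₀.1 (hwgt n) (hwlt n).le) hr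
      rw [neg_zero, max_self, EReal.coe_zero] at hlim
      exact lminus_eq_zero hlim hA_le
    have hB : ℓ z (σ 1) = (((1 - t₀) * Lr : ℝ) : EReal) := by
      have hr : Tendsto (fun n => (1 - w n) * Lr) atTop (𝓝 ((1 - t₀) * Lr)) :=
        (((tendsto_const_nhds : Tendsto (fun _ : ℕ => (1:ℝ)) atTop (𝓝 1)).sub hw_t₀).mul_const Lr)
      have hlim := lminus_limit ℓ hcont hw_conv
        (tendsto_const_nhds : Tendsto (fun _ : ℕ => σ 1) atTop (𝓝 (σ 1)))
        (fun n => hval (w n) 1 (hw0 n) (hwlt n) le_rfl) hr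
      rw [max_eq_left (by nlinarith : (0:ℝ) ≤ -((1 - t₀) * Lr))] at hlim
      have := lminus_eq_coe hlim (by nlinarith)
      rw [neg_neg] at this
      exact this
    have hBneg : (1 - t₀) * Lr < 0 := by nlinarith
    have hzne1 : z ≠ σ 1 := by
      intro h
      rw [h] at hB
      refine self_not_neg ℓ htri hbot (σ 1) ?_
      rw [hB, ← EReal.coe_zero, EReal.coe_lt_coe_iff]
      exact hBneg
    obtain ⟨δ, hδ, hδ0, hδ1⟩ := hgeo (σ t₀) z hA.le (fun h => hzne h.symm)
    obtain ⟨γ₂, hγ₂, hγ₂0, hγ₂1⟩ := hgeo z (σ 1)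
      (by rw [hB, ← EReal.coe_zero, EReal.coe_le_coe_iff]; exact hBneg.le) hzne1
    have hy' : δ 1 = γ₂ 0 := by rw [hδ1, hγ₂0]
    have hadd : ℓ (δ 0) (γ₂ 1) = ℓ (δ 0) (δ 1) + ℓ (γ₂ 0) (γ₂ 1) := by
      rw [hδ0, hδ1, hγ₂0, hγ₂1, hA, zero_add, hB, hval t₀ 1 ht₀.1 ht₀1 le_rfl]
    have hΓ := concat_lcurve ℓ hbot htri hδ hγ₂ hy' hadd
    have hΓ0 : concatP δ γ₂ 0 = σ t₀ := by
      rw [concatP_left _ _ (by norm_num : (0:ℝ) ≤ 1/2), mul_zero, hδ0]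
    have hΓ1 : concatP δ γ₂ 1 = σ 1 := by
      rw [concatP_right _ _ hy' (by norm_num : (1/2:ℝ) ≤ 1)]
      norm_num [hγ₂1]
    have hΓhalf : concatP δ γ₂ (1/2) = z := by
      rw [concatP_left _ _ le_rfl, show 2*(1/2:ℝ) = 1 by norm_num, hδ1]
    refine hreg (concatP δ γ₂) hΓ ?_ ⟨0, 1/2, le_rfl, by norm_num, by norm_num, ?_, ?_⟩
    · rw [hΓ0, hΓ1, hval t₀ 1 ht₀.1 ht₀1 le_rfl, ← EReal.coe_zero, EReal.coe_lt_coe_iff]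
      exact hBneg
    · intro a b ha hab hb
      rw [concatP_left _ _ (hab.le.trans hb), concatP_left _ _ hb]
      exact null_segment ℓ htri δ hδ.1.1 (by rw [hδ0, hδ1]; exact hA) (2*a) (2*b)
        (by linarith) (by linarith) (by linarith)
    · refine ⟨1/2, ⟨by norm_num, by norm_num⟩, ?_⟩
      rw [hΓhalf, hΓ0]
      exact hzne
  · -- approach from the left
    have hslt : ∀ᶠ n in atTop, s n < t₀ := by
      have h1 : ∀ᶠ n in atTop, ¬ t₀ < s n := Filter.not_frequently.mp hside
      refine h1.mono fun n hn => ?_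
      rcases lt_or_eq_of_le (not_lt.mp hn) with h | h
      · exact h
      · exfalso
        have := hs_d n
        rw [h, dist_self] at this
        linarith
    have ht₀0 : 0 < t₀ := by
      obtain ⟨n₀, hn₀⟩ := hslt.exists
      exact lt_of_le_of_lt (hs_mem n₀).1 hn₀
    have hev0 : ∀ᶠ n in atTop, 0 < s n := hs_t₀.eventually_const_lt ht₀0
    obtain ⟨ρ, hρ, hρP⟩ := Filter.extraction_of_frequently_atTop
      ((hslt.and hev0).frequently)
    set w : ℕ → ℝ := fun n => s (ρ n) with hwdef
    have hw_t₀ : Tendsto w atTop (𝓝 t₀) := hs_t₀.comp hρ.tendsto_atTop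
    have hw_conv : Tendsto (fun n => σ (w n)) atTop (𝓝 z) := hs_conv.comp hρ.tendsto_atTop
    have hwlt : ∀ n, w n < t₀ := fun n => (hρP n).1
    have hwpos : ∀ n, 0 < w n := fun n => (hρP n).2
    have hw1 : ∀ n, w n ≤ 1 := fun n => (hs_mem (ρ n)).2
    have hA_le : ℓ z (σ t₀) ≤ 0 := by
      have hzmem : z ∈ ({y | ℓ (σ 0) y ≤ 0} ∩ {y | ℓ y (σ t₀) ≤ 0}) :=
        (hdiamond (σ 0) (σ t₀)).isClosed.mem_of_tendsto hw_conv
          (Eventually.of_forall fun n =>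
            ⟨fact1 0 (w n) le_rfl (hwpos n).le (hw1 n),
             fact1 (w n) t₀ (hwpos n).le (hwlt n).le ht₀.2⟩)
      exact hzmem.2
    have hA : ℓ z (σ t₀) = 0 := by
      have hr : Tendsto (fun n => (t₀ - w n) * Lr) atTop (𝓝 0) := by
        have := (((tendsto_const_nhds : Tendsto (fun _ : ℕ => t₀) atTop (𝓝 t₀)).sub hw_t₀).mul_const Lr)
        simpa using this
      have hlim := lminus_limit ℓ hcont hw_conv
        (tendsto_const_nhds : Tendsto (fun _ : ℕ => σ t₀) atTop (𝓝 (σ t₀)))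
        (fun n => hval (w n) t₀ (hwpos n).le (hwlt n) ht₀.2) hr
      rw [neg_zero, max_self, EReal.coe_zero] at hlim
      exact lminus_eq_zero hlim hA_le
    have hB : ℓ (σ 0) z = (((t₀ - 0) * Lr : ℝ) : EReal) := by
      have hr : Tendsto (fun n => (w n - 0) * Lr) atTop (𝓝 ((t₀ - 0) * Lr)) :=
        ((hw_t₀.sub_const 0).mul_const Lr)
      have hlim := lminus_limit ℓ hcont
        (tendsto_const_nhds : Tendsto (fun _ : ℕ => σ 0) atTop (𝓝 (σ 0)))
        hw_conv (fun n => hval 0 (w n) le_rfl (hwpos n) (hw1 n)) hr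
      rw [max_eq_left (by nlinarith : (0:ℝ) ≤ -((t₀ - 0) * Lr))] at hlim
      have := lminus_eq_coe hlim (by nlinarith)
      rw [neg_neg] at this
      exact this
    have hBneg : (t₀ - 0) * Lr < 0 := by nlinarith
    have hzne0 : σ 0 ≠ z := by
      intro h
      rw [← h] at hB
      refine self_not_neg ℓ htri hbot (σ 0) ?_
      rw [hB, ← EReal.coe_zero, EReal.coe_lt_coe_iff]
      exact hBneg
    obtain ⟨γ₁, hγ₁, hγ₁0, hγ₁1⟩ := hgeo (σ 0) z
      (by rw [hB, ← EReal.coe_zero, EReal.coe_le_coe_iff]; exact hBneg.le) hzne0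
    obtain ⟨δ, hδ, hδ0, hδ1⟩ := hgeo z (σ t₀) hA.le hzne
    have hy' : γ₁ 1 = δ 0 := by rw [hγ₁1, hδ0]
    have hadd : ℓ (γ₁ 0) (δ 1) = ℓ (γ₁ 0) (γ₁ 1) + ℓ (δ 0) (δ 1) := by
      rw [hγ₁0, hγ₁1, hδ0, hδ1, hA, add_zero, hB, hval 0 t₀ le_rfl ht₀0 ht₀.2]
    have hΓ := concat_lcurve ℓ hbot htri hγ₁ hδ hy' hadd
    have hΓ0 : concatP γ₁ δ 0 = σ 0 := by
      rw [concatP_left _ _ (by norm_num : (0:ℝ) ≤ 1/2), mul_zero, hγ₁0]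
    have hΓ1 : concatP γ₁ δ 1 = σ t₀ := by
      rw [concatP_right _ _ hy' (by norm_num : (1/2:ℝ) ≤ 1)]
      norm_num [hδ1]
    have hΓhalf : concatP γ₁ δ (1/2) = z := by
      rw [concatP_left _ _ le_rfl, show 2*(1/2:ℝ) = 1 by norm_num, hγ₁1]
    refine hreg (concatP γ₁ δ) hΓ ?_ ⟨1/2, 1, by norm_num, by norm_num, le_rfl, ?_, ?_⟩
    · rw [hΓ0, hΓ1, hval 0 t₀ le_rfl ht₀0 ht₀.2, ← EReal.coe_zero, EReal.coe_lt_coe_iff]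
      exact hBneg
    · intro a b ha hab hb
      rw [concatP_right _ _ hy' ha, concatP_right _ _ hy' (ha.trans hab.le)]
      exact null_segment ℓ htri δ hδ.1.1 (by rw [hδ0, hδ1]; exact hA) (2*a - 1) (2*b - 1)
        (by linarith) (by linarith) (by linarith)
    · refine ⟨1, ⟨by norm_num, le_rfl⟩, ?_⟩
      rw [hΓ1, hΓhalf]
      exact fun h => hzne h.symm
end

section
/- Let (M,d,ℓ) be a causal geodesic space, q ∈ (0,1], and η a Borel probability measure on the space of timelike ℓ-geodesics TGeo^ℓ(M) such that γ = (e₀ × e₁)_# η is an ℓ_q-optimal timelike coupling of μ₀ = (e₀)_# η and μ₁ = (e₁)_# η with ℓ_q(μ₀,μ₁) ∈ (-∞,0). Then t ↦ μ_t := (e_t)_# η is a timelike ℓ_q-path: ℓ_q(μ_s, μ_t) = (t-s) ℓ_q(μ₀, μ₁) for all 0 ≤ s < t ≤ 1. -/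
open Set MeasureTheory
open scoped ENNReal

/-- The set of timelike ℓ-geodesics: continuous paths affinely parameterized
(with respect to proper time) over `[0,1]`, with timelike separated endpoints. -/
def TGeoSet {M : Type*} [MetricSpace M] (ℓ : M → M → EReal) : Set (ℝ → M) :=
  {σ | ContinuousOn σ (Icc (0:ℝ) 1) ∧ ⊥ < ℓ (σ 0) (σ 1) ∧ ℓ (σ 0) (σ 1) < 0 ∧
    ∀ s t : ℝ, 0 ≤ s → s < t → t ≤ 1 →
      ℓ (σ s) (σ t) = ((t - s : ℝ) : EReal) * ℓ (σ 0) (σ 1)}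

/-- A causal coupling of μ and ν: a coupling giving full mass to {ℓ ≤ 0}. -/
def IsCausalCoupling {M : Type*} [MeasurableSpace M] (ℓ : M → M → EReal)
    (μ ν : Measure M) (γ : Measure (M × M)) : Prop :=
  γ.map Prod.fst = μ ∧ γ.map Prod.snd = ν ∧ γ {p : M × M | ℓ p.1 p.2 ≤ 0} = 1

/-- The cost `-(∫ |ℓ|^q dγ)^{1/q}` of a coupling γ, valued in EReal. -/
noncomputable def lqCost {M : Type*} [MeasurableSpace M] (ℓ : M → M → EReal)
    (q : ℝ) (γ : Measure (M × M)) : EReal :=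
  -((((∫⁻ p, (ENNReal.ofReal (-(ℓ p.1 p.2)).toReal) ^ q ∂γ) ^ (1 / q) : ℝ≥0∞) : EReal))

/-- The q-Lorentz–Wasserstein time separation `ℓ_q(μ,ν)`; it equals `+∞` when no
causal coupling exists. -/
noncomputable def lqSep {M : Type*} [MeasurableSpace M] (ℓ : M → M → EReal)
    (q : ℝ) (μ ν : Measure M) : EReal :=
  sInf {v : EReal | ∃ γ : Measure (M × M), IsCausalCoupling ℓ μ ν γ ∧ v = lqCost ℓ q γ}

/-!
Write `‖γ‖ = (∫ |ℓ|^q dγ)^(1/q)` (`lqNorm`) and `I = ‖(e₀, e₁)_# η‖ = |ℓ_q(μ₀, μ₁)|`.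
Since `η` lives on affinely parametrised timelike geodesics, `(e_s, e_t)_# η` is a causal coupling
of `μ_s, μ_t` with `‖(e_s, e_t)_# η‖ = (t - s) I`, whence `ℓ_q(μ_s, μ_t) ≤ (t - s) ℓ_q(μ₀, μ₁)`.
Conversely, glue any causal coupling `γ` of `μ_s, μ_t` between `(e₀, e_s)_# η` and
`(e_t, e₁)_# η`: the result is a causal coupling of `μ₀, μ₁` whose size is at least
`s I + ‖γ‖ + (1 - t) I`, by the reverse triangle inequality for `ℓ` and the reverse Minkowski
inequality (this is where `q ≤ 1` enters). By optimality it is at most `I`, so `‖γ‖ ≤ (t - s) I`.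
-/

open ProbabilityTheory

namespace ENNReal

theorem arith_mean2_rpow_le_rpow_arith_mean (w₁ w₂ z₁ z₂ : ℝ≥0∞) (hw : w₁ + w₂ = 1) {q : ℝ}
    (hq0 : 0 < q) (hq1 : q ≤ 1) : w₁ * z₁ ^ q + w₂ * z₂ ^ q ≤ (w₁ * z₁ + w₂ * z₂) ^ q := by
  have h := rpow_arith_mean_le_arith_mean2_rpow w₁ w₂ (z₁ ^ q) (z₂ ^ q) hw
    (one_le_inv_iff₀.2 ⟨hq0, hq1⟩)
  rwa [← rpow_mul, ← rpow_mul, mul_inv_cancel₀ hq0.ne', rpow_one, rpow_one,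
    rpow_inv_le_iff hq0] at h

variable {α : Type*} [MeasurableSpace α] {μ : Measure α}

theorem lintegral_div_rpow {f : α → ℝ≥0∞} {q : ℝ} (hq0 : 0 < q) {c : ℝ≥0∞} (hc0 : c ≠ 0) :
    ∫⁻ x, (f x / c) ^ q ∂μ = (∫⁻ x, f x ^ q ∂μ) / c ^ q := by
  simp_rw [div_rpow_of_nonneg _ _ hq0.le, div_eq_mul_inv]
  exact lintegral_mul_const' _ _
    (inv_ne_top.2 (rpow_pos_of_nonneg (pos_iff_ne_zero.2 hc0) hq0.le).ne')

/-- The reverse Minkowski inequality. -/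
theorem lintegral_Lp_add_ge_of_le_one {f g : α → ℝ≥0∞} {q : ℝ} (hq0 : 0 < q) (hq1 : q ≤ 1) :
    (∫⁻ x, f x ^ q ∂μ) ^ (1 / q) + (∫⁻ x, g x ^ q ∂μ) ^ (1 / q) ≤
      (∫⁻ x, (f x + g x) ^ q ∂μ) ^ (1 / q) := by
  simp only [one_div]
  set a := (∫⁻ x, f x ^ q ∂μ) ^ q⁻¹
  set b := (∫⁻ x, g x ^ q ∂μ) ^ q⁻¹
  have hmono : ∀ h : α → ℝ≥0∞, h ≤ f + g →
      (∫⁻ x, h x ^ q ∂μ) ^ q⁻¹ ≤ (∫⁻ x, (f x + g x) ^ q ∂μ) ^ q⁻¹ := fun h hh =>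
    rpow_le_rpow (lintegral_mono fun x => rpow_le_rpow (hh x) hq0.le) (inv_pos.2 hq0).le
  have hfa : a ≤ _ := hmono f le_self_add
  have hgb : b ≤ _ := hmono g le_add_self
  rcases eq_or_ne a 0 with ha0 | ha0
  · simpa [ha0] using hgb
  rcases eq_or_ne b 0 with hb0 | hb0
  · simpa [hb0] using hfa
  rcases eq_or_ne a ⊤ with hat | hat
  · simpa [hat] using hfa
  rcases eq_or_ne b ⊤ with hbt | hbt
  · simpa [hbt] using hgb
  -- normalise `f` and `g` to unit `L^q` size and use concavity of `x ↦ x ^ q` pointwise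
  have hab0 : a + b ≠ 0 := by simp [ha0]
  have habt : a + b ≠ ⊤ := add_ne_top.2 ⟨hat, hbt⟩
  have hrpow0 : ∀ c : ℝ≥0∞, c ≠ 0 → c ^ q ≠ 0 := fun c hc0 =>
    (rpow_pos_of_nonneg (pos_iff_ne_zero.2 hc0) hq0.le).ne'
  have hunit : ∀ (h : α → ℝ≥0∞) (c : ℝ≥0∞), c = (∫⁻ x, h x ^ q ∂μ) ^ q⁻¹ → c ≠ 0 → c ≠ ⊤ →
      ∫⁻ x, (h x / c) ^ q ∂μ = 1 := by
    rintro h c hc hc0 hct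
    rw [lintegral_div_rpow hq0 hc0, ← rpow_inv_rpow hq0.ne' (∫⁻ x, h x ^ q ∂μ), ← hc]
    exact ENNReal.div_self (hrpow0 c hc0) (rpow_ne_top_of_nonneg hq0.le hct)
  have hweight : ∀ c y, c ≠ 0 → c ≠ ⊤ → c / (a + b) * (y / c) = y / (a + b) := by
    intro c y hc0 hct
    simp only [div_eq_mul_inv]
    calc c * (a + b)⁻¹ * (y * c⁻¹) = y * (a + b)⁻¹ * (c * c⁻¹) := by ring
      _ = y * (a + b)⁻¹ := by rw [ENNReal.mul_inv_cancel hc0 hct, mul_one]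
  have hw : a / (a + b) + b / (a + b) = 1 := by
    rw [ENNReal.div_add_div_same, ENNReal.div_self hab0 habt]
  have hpt : ∀ x, a / (a + b) * (f x / a) ^ q + b / (a + b) * (g x / b) ^ q ≤
      ((f x + g x) / (a + b)) ^ q := fun x => by
    simpa only [hweight _ _ ha0 hat, hweight _ _ hb0 hbt, ENNReal.add_div] using
      arith_mean2_rpow_le_rpow_arith_mean _ _ (f x / a) (g x / b) hw hq0 hq1
  have key : 1 ≤ (∫⁻ x, (f x + g x) ^ q ∂μ) / (a + b) ^ q :=
    calc 1 = a / (a + b) * ∫⁻ x, (f x / a) ^ q ∂μ + b / (a + b) * ∫⁻ x, (g x / b) ^ q ∂μ := by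
          rw [hunit f a rfl ha0 hat, hunit g b rfl hb0 hbt, mul_one, mul_one, hw]
      _ ≤ ∫⁻ x, a / (a + b) * (f x / a) ^ q ∂μ + ∫⁻ x, b / (a + b) * (g x / b) ^ q ∂μ :=
          add_le_add (lintegral_const_mul_le _ _) (lintegral_const_mul_le _ _)
      _ ≤ ∫⁻ x, ((f x + g x) / (a + b)) ^ q ∂μ := (le_lintegral_add _ _).trans (lintegral_mono hpt)
      _ = (∫⁻ x, (f x + g x) ^ q ∂μ) / (a + b) ^ q := lintegral_div_rpow hq0 hab0
  rw [ENNReal.le_div_iff_mul_le (Or.inl (hrpow0 _ hab0))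
    (Or.inl (rpow_ne_top_of_nonneg hq0.le habt)), one_mul] at key
  exact (le_rpow_inv_iff hq0).2 key

theorem le_ofReal_sub_mul_of_add_le {I x : ℝ≥0∞} (hI : I ≠ ⊤) {s t : ℝ} (hs : 0 ≤ s)
    (hst : s ≤ t) (ht : t ≤ 1)
    (h : ENNReal.ofReal s * I + x + ENNReal.ofReal (1 - t) * I ≤ I) :
    x ≤ ENNReal.ofReal (t - s) * I := by
  have hsplit : I = ENNReal.ofReal s * I + ENNReal.ofReal (t - s) * I +
      ENNReal.ofReal (1 - t) * I := by
    rw [← add_mul, ← add_mul, ← ENNReal.ofReal_add hs (by linarith),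
      ← ENNReal.ofReal_add (by linarith) (by linarith)]
    norm_num
  have hfin : ENNReal.ofReal s * I + ENNReal.ofReal (1 - t) * I ≠ ⊤ := by finiteness
  rw [← ENNReal.add_le_add_iff_left hfin]
  calc ENNReal.ofReal s * I + ENNReal.ofReal (1 - t) * I + x
      = ENNReal.ofReal s * I + x + ENNReal.ofReal (1 - t) * I := by ring
    _ ≤ I := h
    _ = _ := by nth_rewrite 1 [hsplit]; ring

end ENNReal

theorem MeasureTheory.Measure.exists_fst_eq_and_map_eq_of_snd_eq_fst {α β γ : Type*}
    [MeasurableSpace α] [MeasurableSpace β] [MeasurableSpace γ] [StandardBorelSpace γ]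
    [Nonempty γ] (μ : Measure (α × β)) (ν : Measure (β × γ)) [SFinite μ] [IsFiniteMeasure ν]
    (h : μ.snd = ν.fst) :
    ∃ π : Measure ((α × β) × γ), π.fst = μ ∧ π.map (fun p => (p.1.2, p.2)) = ν := by
  refine ⟨μ ⊗ₘ ν.condKernel.comap Prod.snd measurable_snd, Measure.fst_compProd _ _, ?_⟩
  ext E hE
  have hg : Measurable fun p : (α × β) × γ => (p.1.2, p.2) := by fun_prop
  conv_rhs => rw [← ν.disintegrate ν.condKernel, ← h, Measure.compProd_apply hE, Measure.snd,
    lintegral_map (Kernel.measurable_kernel_prodMk_left hE) measurable_snd]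
  rw [Measure.map_apply hg hE, Measure.compProd_apply (hg hE)]
  rfl

theorem MeasureTheory.ae_of_forall_mem_of_measure_eq_one {α : Type*} [MeasurableSpace α]
    {μ : Measure α} [IsProbabilityMeasure μ] {s : Set α} (hs : μ s = 1) {p : α → Prop}
    (hp : MeasurableSet {x | p x}) (h : ∀ x ∈ s, p x) : ∀ᵐ x ∂μ, p x := by
  rw [ae_iff, ← compl_ofPred, prob_compl_eq_zero_iff hp]
  exact le_antisymm prob_le_one (hs ▸ measure_mono h)

theorem EReal.exists_coe_of_le_zero {e : EReal} (hbot : e ≠ ⊥) (he : e ≤ 0) :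
    ∃ r : ℝ, r ≤ 0 ∧ e = r := by
  induction e using EReal.rec with
  | bot => exact absurd rfl hbot
  | coe r => exact ⟨r, by exact_mod_cast he, rfl⟩
  | top => exact absurd he (by simp)

theorem EReal.neg_coe_ofReal_mul {c : ℝ} (hc : 0 ≤ c) (x : ℝ≥0∞) :
    -((ENNReal.ofReal c * x : ℝ≥0∞) : EReal) = (c : EReal) * -(x : EReal) := by
  rw [EReal.coe_ennreal_mul, EReal.coe_ennreal_ofReal, max_eq_left hc, mul_neg]

section Lorentzian

variable {M : Type*}

/-- The integrand of `lqCost`: `-ℓ x y` when this is a nonnegative real, and `0` otherwise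
(`EReal.toReal` sends `±⊤` to `0`). -/
noncomputable def timeSep (ℓ : M → M → EReal) (x y : M) : ℝ≥0∞ :=
  ENNReal.ofReal (-(ℓ x y)).toReal

noncomputable def lqNorm [MeasurableSpace M] (ℓ : M → M → EReal) (q : ℝ)
    (γ : Measure (M × M)) : ℝ≥0∞ :=
  (∫⁻ p, timeSep ℓ p.1 p.2 ^ q ∂γ) ^ (1 / q)

theorem lqCost_eq_neg_lqNorm [MeasurableSpace M] (ℓ : M → M → EReal) (q : ℝ)
    (γ : Measure (M × M)) : lqCost ℓ q γ = -(lqNorm ℓ q γ : EReal) := rfl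

section TimeSep

variable {ℓ : M → M → EReal}

theorem timeSep_eq_ofReal_toReal_max (x y : M) :
    timeSep ℓ x y = ENNReal.ofReal (max (-(ℓ x y)) 0).toReal := by
  unfold timeSep
  induction -(ℓ x y) using EReal.rec with
  | bot => simp
  | coe r => rcases le_total r 0 with h | h <;> simp [h]
  | top => simp

theorem timeSep_of_eq_coe {x y : M} {r : ℝ} (h : ℓ x y = r) :
    timeSep ℓ x y = ENNReal.ofReal (-r) := by
  rw [timeSep, h, ← EReal.coe_neg, EReal.toReal_coe]

theorem timeSep_add_timeSep_le (hℓ : ∀ x y, ℓ x y ≠ ⊥)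
    (htri : ∀ x y z, ℓ x y < ⊤ → ℓ y z < ⊤ → ℓ x z ≤ ℓ x y + ℓ y z) {x y z : M}
    (hxy : ℓ x y ≤ 0) (hyz : ℓ y z ≤ 0) :
    ℓ x z ≤ 0 ∧ timeSep ℓ x y + timeSep ℓ y z ≤ timeSep ℓ x z := by
  obtain ⟨r, hr0, hr⟩ := EReal.exists_coe_of_le_zero (hℓ x y) hxy
  obtain ⟨s, hs0, hs⟩ := EReal.exists_coe_of_le_zero (hℓ y z) hyz
  have hxz : ℓ x z ≤ (r + s : ℝ) := by
    rw [EReal.coe_add, ← hr, ← hs]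
    exact htri x y z (hxy.trans_lt EReal.zero_lt_top) (hyz.trans_lt EReal.zero_lt_top)
  have hxz0 : ℓ x z ≤ 0 := hxz.trans (by exact_mod_cast add_nonpos hr0 hs0)
  obtain ⟨u, -, hu⟩ := EReal.exists_coe_of_le_zero (hℓ x z) hxz0
  rw [hu] at hxz
  have hu_le : u ≤ r + s := by exact_mod_cast hxz
  refine ⟨hxz0, ?_⟩
  rw [timeSep_of_eq_coe hr, timeSep_of_eq_coe hs, timeSep_of_eq_coe hu,
    ← ENNReal.ofReal_add (by linarith) (by linarith)]
  exact ENNReal.ofReal_le_ofReal (by linarith)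

end TimeSep

section Coupling

variable [MeasurableSpace M] {ℓ : M → M → EReal} {μ ν ρ : Measure M} {γ : Measure (M × M)}

theorem IsCausalCoupling.isProbabilityMeasure [IsProbabilityMeasure μ]
    (h : IsCausalCoupling ℓ μ ν γ) : IsProbabilityMeasure γ :=
  have : IsProbabilityMeasure (γ.map Prod.fst) := h.1 ▸ ‹_›
  Measure.isProbabilityMeasure_of_map Prod.fst

theorem isCausalCoupling_iff_ae [IsProbabilityMeasure γ]
    (hC : MeasurableSet {p : M × M | ℓ p.1 p.2 ≤ 0}) :
    IsCausalCoupling ℓ μ ν γ ↔ γ.fst = μ ∧ γ.snd = ν ∧ ∀ᵐ p ∂γ, ℓ p.1 p.2 ≤ 0 := by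
  rw [ae_iff_measure_eq hC.nullMeasurableSet, measure_univ]
  rfl

theorem lqNorm_add_le_lqNorm_map_of_ae {π : Measure ((M × M) × M)}
    (hτ : Measurable fun p : M × M => timeSep ℓ p.1 p.2) {q : ℝ} (hq0 : 0 < q) (hq1 : q ≤ 1)
    (hchain : ∀ᵐ p ∂π, timeSep ℓ p.1.1 p.1.2 + timeSep ℓ p.1.2 p.2 ≤ timeSep ℓ p.1.1 p.2) :
    lqNorm ℓ q π.fst + lqNorm ℓ q (π.map fun p => (p.1.2, p.2)) ≤
      lqNorm ℓ q (π.map fun p => (p.1.1, p.2)) := by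
  simp only [lqNorm, Measure.fst]
  rw [lintegral_map (by fun_prop) (by fun_prop), lintegral_map (by fun_prop) (by fun_prop),
    lintegral_map (by fun_prop) (by fun_prop)]
  refine (ENNReal.lintegral_Lp_add_ge_of_le_one hq0 hq1).trans ?_
  gcongr ?_ ^ _
  exact lintegral_mono_ae (hchain.mono fun p hp => by gcongr)

theorem IsCausalCoupling.exists_lqNorm_add_le [StandardBorelSpace M]
    (hC : MeasurableSet {p : M × M | ℓ p.1 p.2 ≤ 0})
    (hτ : Measurable fun p : M × M => timeSep ℓ p.1 p.2) (hℓ : ∀ x y, ℓ x y ≠ ⊥)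
    (htri : ∀ x y z, ℓ x y < ⊤ → ℓ y z < ⊤ → ℓ x z ≤ ℓ x y + ℓ y z)
    {q : ℝ} (hq0 : 0 < q) (hq1 : q ≤ 1) [IsProbabilityMeasure μ] {β : Measure (M × M)}
    (hβ : IsCausalCoupling ℓ μ ν β) (hγ : IsCausalCoupling ℓ ν ρ γ) :
    ∃ π, IsCausalCoupling ℓ μ ρ π ∧ lqNorm ℓ q β + lqNorm ℓ q γ ≤ lqNorm ℓ q π := by
  have := hβ.isProbabilityMeasure
  have : IsProbabilityMeasure ν := hβ.2.1 ▸ Measure.isProbabilityMeasure_map (by fun_prop)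
  have := hγ.isProbabilityMeasure
  have : Nonempty M := nonempty_of_isProbabilityMeasure μ
  obtain ⟨π, hπβ, hπγ⟩ :=
    Measure.exists_fst_eq_and_map_eq_of_snd_eq_fst β γ (hβ.2.1.trans hγ.1.symm)
  have : IsProbabilityMeasure π :=
    (Measure.isProbabilityMeasure_map_iff measurable_fst.aemeasurable).1 (by
      rw [← Measure.fst, hπβ]; infer_instance)
  have : IsProbabilityMeasure (π.map fun p => (p.1.1, p.2)) :=
    Measure.isProbabilityMeasure_map (by fun_prop)
  have hβae := ((isCausalCoupling_iff_ae hC).1 hβ).2.2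
  have hγae := ((isCausalCoupling_iff_ae hC).1 hγ).2.2
  rw [← hπβ, Measure.fst, ae_map_iff (by fun_prop) hC] at hβae
  rw [← hπγ, ae_map_iff (by fun_prop) hC] at hγae
  have hchain : ∀ᵐ p ∂π, ℓ p.1.1 p.2 ≤ 0 ∧
      timeSep ℓ p.1.1 p.1.2 + timeSep ℓ p.1.2 p.2 ≤ timeSep ℓ p.1.1 p.2 := by
    filter_upwards [hβae, hγae] with p h₁ h₂ using timeSep_add_timeSep_le hℓ htri h₁ h₂
  refine ⟨π.map fun p => (p.1.1, p.2), (isCausalCoupling_iff_ae hC).2 ⟨?_, ?_, ?_⟩, ?_⟩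
  · rw [Measure.fst, Measure.map_map measurable_fst (by fun_prop), ← hβ.1, ← hπβ, Measure.fst,
      Measure.map_map measurable_fst measurable_fst]
    rfl
  · rw [Measure.snd, Measure.map_map measurable_snd (by fun_prop), ← hγ.2.1, ← hπγ,
      Measure.map_map measurable_snd (by fun_prop)]
    rfl
  · exact (ae_map_iff (by fun_prop) hC).2 (hchain.mono fun p hp => hp.1)
  · rw [← hπβ, ← hπγ]
    exact lqNorm_add_le_lqNorm_map_of_ae hτ hq0 hq1 (hchain.mono fun p hp => hp.2)

theorem IsCausalCoupling.lqSep_le (hγ : IsCausalCoupling ℓ μ ν γ) (q : ℝ) :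
    lqSep ℓ q μ ν ≤ lqCost ℓ q γ :=
  sInf_le ⟨γ, hγ, rfl⟩

theorem lqNorm_le_of_lqCost_eq_lqSep {q : ℝ} {π : Measure (M × M)}
    (hopt : lqCost ℓ q γ = lqSep ℓ q μ ν) (hπ : IsCausalCoupling ℓ μ ν π) :
    lqNorm ℓ q π ≤ lqNorm ℓ q γ := by
  have h := hπ.lqSep_le q
  rwa [← hopt, lqCost_eq_neg_lqNorm, lqCost_eq_neg_lqNorm, EReal.neg_le_neg_iff,
    EReal.coe_ennreal_le_coe_ennreal_iff] at h

end Coupling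

section Geodesics

variable [MetricSpace M] {ℓ : M → M → EReal} {σ : ℝ → M} {a b : ℝ}

theorem exists_coe_of_mem_TGeoSet (hσ : σ ∈ TGeoSet ℓ) (ha : 0 ≤ a) (hab : a < b) (hb : b ≤ 1) :
    ∃ r : ℝ, r < 0 ∧ ℓ (σ 0) (σ 1) = r ∧ ℓ (σ a) (σ b) = ((b - a) * r : ℝ) := by
  obtain ⟨-, hbot, hneg, haff⟩ := hσ
  obtain ⟨r, -, hr⟩ := EReal.exists_coe_of_le_zero hbot.ne' hneg.le
  refine ⟨r, by exact_mod_cast hr ▸ hneg, hr, ?_⟩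
  rw [haff a b ha hab hb, hr, EReal.coe_mul]

theorem le_zero_of_mem_TGeoSet (hrefl : ∀ x, ℓ x x ≤ 0) (hσ : σ ∈ TGeoSet ℓ) (ha : 0 ≤ a)
    (hab : a ≤ b) (hb : b ≤ 1) : ℓ (σ a) (σ b) ≤ 0 := by
  rcases hab.eq_or_lt with rfl | hab
  · exact hrefl _
  obtain ⟨r, hr, -, hab'⟩ := exists_coe_of_mem_TGeoSet hσ ha hab hb
  rw [hab']
  exact_mod_cast mul_nonpos_of_nonneg_of_nonpos (sub_nonneg.2 hab.le) hr.le

theorem timeSep_eq_of_mem_TGeoSet (hσ : σ ∈ TGeoSet ℓ) (ha : 0 ≤ a) (hab : a < b) (hb : b ≤ 1) :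
    timeSep ℓ (σ a) (σ b) = ENNReal.ofReal (b - a) * timeSep ℓ (σ 0) (σ 1) := by
  obtain ⟨r, -, h01, hab'⟩ := exists_coe_of_mem_TGeoSet hσ ha hab hb
  rw [timeSep_of_eq_coe hab', timeSep_of_eq_coe h01, ← ENNReal.ofReal_mul (by linarith),
    neg_mul_eq_mul_neg]

variable [MeasurableSpace M] {η : Measure (ℝ → M)} [IsProbabilityMeasure η]

theorem isCausalCoupling_map_eval (hrefl : ∀ x, ℓ x x ≤ 0)
    (hC : MeasurableSet {p : M × M | ℓ p.1 p.2 ≤ 0}) (hη : η (TGeoSet ℓ) = 1) (ha : 0 ≤ a)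
    (hab : a ≤ b) (hb : b ≤ 1) :
    IsCausalCoupling ℓ (η.map fun σ => σ a) (η.map fun σ => σ b)
      (η.map fun σ => (σ a, σ b)) := by
  have hm : Measurable fun σ : ℝ → M => (σ a, σ b) := by fun_prop
  have := Measure.isProbabilityMeasure_map (μ := η) hm.aemeasurable
  refine (isCausalCoupling_iff_ae hC).2 ⟨?_, ?_, (ae_map_iff hm.aemeasurable hC).2 ?_⟩
  · rw [Measure.fst, Measure.map_map measurable_fst hm]; rfl
  · rw [Measure.snd, Measure.map_map measurable_snd hm]; rfl
  · exact ae_of_forall_mem_of_measure_eq_one hη (hm hC) fun σ hσ =>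
      le_zero_of_mem_TGeoSet hrefl hσ ha hab hb

theorem lqNorm_map_eval (hτ : Measurable fun p : M × M => timeSep ℓ p.1 p.2)
    (hη : η (TGeoSet ℓ) = 1) {q : ℝ} (hq0 : 0 < q) (ha : 0 ≤ a) (hab : a < b) (hb : b ≤ 1) :
    lqNorm ℓ q (η.map fun σ => (σ a, σ b)) =
      ENNReal.ofReal (b - a) * lqNorm ℓ q (η.map fun σ => (σ 0, σ 1)) := by
  have hτab : Measurable fun σ : ℝ → M => timeSep ℓ (σ a) (σ b) :=
    hτ.comp (f := fun σ : ℝ → M => (σ a, σ b)) (by fun_prop)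
  have hτ01 : Measurable fun σ : ℝ → M => timeSep ℓ (σ 0) (σ 1) :=
    hτ.comp (f := fun σ : ℝ → M => (σ 0, σ 1)) (by fun_prop)
  have hae : ∀ᵐ σ ∂η, timeSep ℓ (σ a) (σ b) = ENNReal.ofReal (b - a) * timeSep ℓ (σ 0) (σ 1) :=
    ae_of_forall_mem_of_measure_eq_one hη (measurableSet_eq_fun hτab (hτ01.const_mul _))
      fun σ hσ => timeSep_eq_of_mem_TGeoSet hσ ha hab hb
  rw [lqNorm, lqNorm, lintegral_map (by fun_prop) (by fun_prop),
    lintegral_map (by fun_prop) (by fun_prop), lintegral_congr_ae (hae.mono fun σ h => by rw [h])]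
  simp_rw [ENNReal.mul_rpow_of_nonneg _ _ hq0.le]
  rw [lintegral_const_mul _ (by fun_prop), ENNReal.mul_rpow_of_nonneg _ _ (by positivity),
    ← ENNReal.rpow_mul, mul_one_div_cancel hq0.ne', ENNReal.rpow_one]

theorem ofReal_sub_mul_lqNorm_le_lqNorm_map_eval
    (hτ : Measurable fun p : M × M => timeSep ℓ p.1 p.2) (hη : η (TGeoSet ℓ) = 1) {q : ℝ}
    (hq0 : 0 < q) (ha : 0 ≤ a) (hab : a ≤ b) (hb : b ≤ 1) :
    ENNReal.ofReal (b - a) * lqNorm ℓ q (η.map fun σ => (σ 0, σ 1)) ≤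
      lqNorm ℓ q (η.map fun σ => (σ a, σ b)) := by
  rcases hab.eq_or_lt with rfl | hab
  · simp
  · exact (lqNorm_map_eval hτ hη hq0 ha hab hb).ge

theorem lqNorm_le_of_isCausalCoupling_map_eval [StandardBorelSpace M] (hrefl : ∀ x, ℓ x x ≤ 0)
    (htri : ∀ x y z, ℓ x y < ⊤ → ℓ y z < ⊤ → ℓ x z ≤ ℓ x y + ℓ y z)
    (hC : MeasurableSet {p : M × M | ℓ p.1 p.2 ≤ 0})
    (hτ : Measurable fun p : M × M => timeSep ℓ p.1 p.2) (hℓ : ∀ x y, ℓ x y ≠ ⊥)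
    (hη : η (TGeoSet ℓ) = 1) {q : ℝ} (hq0 : 0 < q) (hq1 : q ≤ 1)
    (hopt : lqCost ℓ q (η.map fun σ => (σ 0, σ 1)) =
      lqSep ℓ q (η.map fun σ => σ 0) (η.map fun σ => σ 1))
    (hI : lqNorm ℓ q (η.map fun σ => (σ 0, σ 1)) ≠ ⊤) {s t : ℝ} (hs : 0 ≤ s) (hst : s ≤ t)
    (ht : t ≤ 1) {γ : Measure (M × M)}
    (hγ : IsCausalCoupling ℓ (η.map fun σ => σ s) (η.map fun σ => σ t) γ) :
    lqNorm ℓ q γ ≤ ENNReal.ofReal (t - s) * lqNorm ℓ q (η.map fun σ => (σ 0, σ 1)) := by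
  have := Measure.isProbabilityMeasure_map (μ := η) (measurable_pi_apply (0 : ℝ)).aemeasurable
  obtain ⟨π₁, hπ₁, h₁⟩ := (isCausalCoupling_map_eval hrefl hC hη le_rfl hs (hst.trans ht))
    |>.exists_lqNorm_add_le hC hτ hℓ htri hq0 hq1 hγ
  obtain ⟨π, hπ, h₂⟩ := hπ₁.exists_lqNorm_add_le hC hτ hℓ htri hq0 hq1
    (isCausalCoupling_map_eval hrefl hC hη (hs.trans hst) ht le_rfl)
  refine ENNReal.le_ofReal_sub_mul_of_add_le hI hs hst ht ?_
  calc _ ≤ lqNorm ℓ q (η.map fun σ => (σ 0, σ s)) + lqNorm ℓ q γ +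
          lqNorm ℓ q (η.map fun σ => (σ t, σ 1)) := by
        gcongr
        · simpa using ofReal_sub_mul_lqNorm_le_lqNorm_map_eval hτ hη hq0 le_rfl hs (hst.trans ht)
        · exact ofReal_sub_mul_lqNorm_le_lqNorm_map_eval hτ hη hq0 (hs.trans hst) ht le_rfl
    _ ≤ lqNorm ℓ q π := (add_le_add_left h₁ _).trans h₂
    _ ≤ _ := lqNorm_le_of_lqCost_eq_lqSep hopt hπ

end Geodesics

end Lorentzian

theorem stmt15_general {M : Type*} [MetricSpace M] [TopologicalSpace.SeparableSpace M]
    [CompleteSpace M] [MeasurableSpace M] [BorelSpace M]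
    (ℓ : M → M → EReal)
    (hrefl : ∀ x, ℓ x x ≤ 0)
    (htri : ∀ x y z, ℓ x y < ⊤ → ℓ y z < ⊤ → ℓ x z ≤ ℓ x y + ℓ y z)
    -- causal geodesic space hypotheses:
    (hclosed : IsClosed {p : M × M | ℓ p.1 p.2 ≤ 0})
    (hfin : ∀ x y, max (-(ℓ x y)) 0 ≠ ⊤)
    (hcont : Continuous fun p : M × M => max (-(ℓ p.1 p.2)) 0)
    (q : ℝ) (hq0 : 0 < q) (hq1 : q ≤ 1)
    (η : Measure (ℝ → M)) [IsProbabilityMeasure η]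
    (hTGeo : η (TGeoSet ℓ) = 1)
    -- γ := (e₀ × e₁)_# η is an ℓ_q-optimal timelike coupling:
    (hopt : lqCost ℓ q (η.map fun σ => (σ 0, σ 1)) =
      lqSep ℓ q (η.map fun σ => σ 0) (η.map fun σ => σ 1))
    (hbot : ⊥ < lqSep ℓ q (η.map fun σ => σ 0) (η.map fun σ => σ 1)) :
    ∀ s t : ℝ, 0 ≤ s → s < t → t ≤ 1 →
      lqSep ℓ q (η.map fun σ => σ s) (η.map fun σ => σ t) =
        ((t - s : ℝ) : EReal) *
          lqSep ℓ q (η.map fun σ => σ 0) (η.map fun σ => σ 1) := by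
  intro s t hs hst ht1
  have hC : MeasurableSet {p : M × M | ℓ p.1 p.2 ≤ 0} := hclosed.measurableSet
  have hτ : Measurable fun p : M × M => timeSep ℓ p.1 p.2 := by
    simp_rw [timeSep_eq_ofReal_toReal_max]
    exact hcont.measurable.ereal_toReal.ennreal_ofReal
  have hℓ : ∀ x y, ℓ x y ≠ ⊥ := fun x y h => hfin x y (by simp [h])
  set I := lqNorm ℓ q (η.map fun σ => (σ 0, σ 1))
  have hL : lqSep ℓ q (η.map fun σ => σ 0) (η.map fun σ => σ 1) = -(I : EReal) := hopt.symm
  have hI : I ≠ ⊤ := fun h => by simp [hL, h] at hbot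
  rw [hL, ← EReal.neg_coe_ofReal_mul (sub_nonneg.2 hst.le)]
  refine le_antisymm ?_ (le_sInf ?_)
  · refine ((isCausalCoupling_map_eval hrefl hC hTGeo hs hst.le ht1).lqSep_le q).trans ?_
    exact EReal.neg_le_neg_iff.2 (EReal.coe_ennreal_le_coe_ennreal_iff.2
      (ofReal_sub_mul_lqNorm_le_lqNorm_map_eval hτ hTGeo hq0 hs hst.le ht1))
  · rintro _ ⟨γ, hγ, rfl⟩
    exact EReal.neg_le_neg_iff.2 (EReal.coe_ennreal_le_coe_ennreal_iff.2
      (lqNorm_le_of_isCausalCoupling_map_eval hrefl htri hC hτ hℓ hTGeo hq0 hq1 hopt hI hs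
        hst.le ht1 hγ))

/-- in a causal geodesic space, if η is a probability measure on
timelike ℓ-geodesics whose endpoint coupling is an ℓ_q-optimal timelike coupling
with finite negative cost, then t ↦ (e_t)_# η is a timelike ℓ_q-path. -/
theorem stmt15 {M : Type*} [MetricSpace M] [TopologicalSpace.SeparableSpace M]
    [CompleteSpace M] [MeasurableSpace M] [BorelSpace M]
    (ℓ : M → M → EReal)
    (hrange : ∀ x y, ℓ x y ≤ 0 ∨ ℓ x y = ⊤)
    (hrefl : ∀ x, ℓ x x ≤ 0)
    (htri : ∀ x y z, ℓ x y < ⊤ → ℓ y z < ⊤ → ℓ x z ≤ ℓ x y + ℓ y z)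
    -- causal geodesic space hypotheses:
    (hclosed : IsClosed {p : M × M | ℓ p.1 p.2 ≤ 0})
    (hfin : ∀ x y, max (-(ℓ x y)) 0 ≠ ⊤)
    (hcont : Continuous fun p : M × M => max (-(ℓ p.1 p.2)) 0)
    (hgeo : IsGeodesicSpacetime ℓ)
    (hreg : IsRegularSpacetime ℓ)
    (hKgh : ∀ X Y : Set M, IsCompact X → IsCompact Y →
      IsCompact ({z | ∃ x ∈ X, ℓ x z ≤ 0} ∩ {z | ∃ y ∈ Y, ℓ z y ≤ 0}))
    (q : ℝ) (hq0 : 0 < q) (hq1 : q ≤ 1)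
    (η : Measure (ℝ → M)) [IsProbabilityMeasure η]
    (hTGeo : η (TGeoSet ℓ) = 1)
    -- γ := (e₀ × e₁)_# η is an ℓ_q-optimal timelike coupling:
    (hcausal : IsCausalCoupling ℓ (η.map fun σ => σ 0) (η.map fun σ => σ 1)
      (η.map fun σ => (σ 0, σ 1)))
    (htimelike : (η.map fun σ => (σ 0, σ 1)) {p : M × M | ℓ p.1 p.2 < 0} = 1)
    (hopt : lqCost ℓ q (η.map fun σ => (σ 0, σ 1)) =
      lqSep ℓ q (η.map fun σ => σ 0) (η.map fun σ => σ 1))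
    (hbot : ⊥ < lqSep ℓ q (η.map fun σ => σ 0) (η.map fun σ => σ 1))
    (hneg : lqSep ℓ q (η.map fun σ => σ 0) (η.map fun σ => σ 1) < 0) :
    ∀ s t : ℝ, 0 ≤ s → s < t → t ≤ 1 →
      lqSep ℓ q (η.map fun σ => σ s) (η.map fun σ => σ t) =
        ((t - s : ℝ) : EReal) *
          lqSep ℓ q (η.map fun σ => σ 0) (η.map fun σ => σ 1) :=
  stmt15_general ℓ hrefl htri hclosed hfin hcont q hq0 hq1 η hTGeo hopt hbot
end

section
/- Let (M^n, g) be a smooth Lorentzian manifold of signature (+,-,...,-) with a continuously differentiable symmetric (0,2)-tensor field F. Then F(p,p) ≥ 0 for all null vectors p ∈ TM if and only if for every compact Z ⊂ M, C_Z^T := inf over z ∈ Z and timelike p ∈ T_z M (g_z(p,p) > 0) of F(p,p)/g(p,p) is finite (> -∞). -/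
/-!
Fix a timelike `T` at a point and split a timelike `p` as `a • T + w` with `w ⊥ T`, so that `w` is
spacelike. The vectors `T ± c • w` with `c² = g(T,T) / (-g(w,w))` are null and `p` is a combination
of them with coefficients of the same sign; expanding `F(p,p)` in them shows that `F(p,p) ≥ 0` as
soon as `F` is nonnegative on null vectors, `F(T,T) ≥ 0` and `F ≤ 0` on `T^⊥`. For `F + K g` the
last two conditions hold once `K` is large: at one point by compactness of the unit sphere of `T^⊥`,
near that point by the tube lemma in a local trivialization of the tangent bundle, and on a
compact `Z` by covering it with finitely many such neighbourhoods. This gives `F ≥ -K g` on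
timelike vectors over `Z`.

Conversely, if `p` is null and nonzero then `g(T,p) ≠ 0`, the vectors `p + t • g(T,p) • T` are
timelike for `t > 0`, and letting `t → 0` in `F ≥ C g` gives `F(p,p) ≥ 0`.
-/

open Filter Topology Set Metric Bundle

open scoped Manifold

theorem IsCompact.exists_forall_of_forall_exists_eventually {α X : Type*} [SemilatticeInf α]
    [Nonempty α] [TopologicalSpace X] {Z : Set X} (hZ : IsCompact Z) {P : α → X → Prop}
    (hP : ∀ z, Antitone fun C => P C z) (hloc : ∀ z ∈ Z, ∃ C, ∀ᶠ y in 𝓝 z, P C y) :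
    ∃ C, ∀ z ∈ Z, P C z := by
  have h : ∀ z ∈ Z, ∀ᶠ q : α × X in atBot ×ˢ 𝓝 z, P q.1 q.2 := fun z hz => by
    obtain ⟨C, hC⟩ := hloc z hz
    exact ((eventually_le_atBot C).prod_mk hC).mono fun q hq => hP q.2 hq.1 hq.2
  have hZ' : ∀ᶠ q : α × X in atBot ×ˢ 𝓝ˢ Z, P q.1 q.2 := hZ.mem_prod_nhdsSet_of_forall h
  obtain ⟨C, hC⟩ := hZ'.curry.exists
  exact ⟨C, fun z hz => hC.self_of_nhdsSet z hz⟩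

theorem eq_zero_of_minkowski_orthogonal {ι : Type*} (s : Finset ι) {x₀ y₀ : ℝ} {x y : ι → ℝ}
    (hx : ∑ i ∈ s, x i ^ 2 < x₀ ^ 2) (hxy : x₀ * y₀ = ∑ i ∈ s, x i * y i)
    (hy : ∑ i ∈ s, y i ^ 2 ≤ y₀ ^ 2) : y₀ = 0 ∧ ∀ i ∈ s, y i = 0 := by
  have hcs := Finset.sum_mul_sq_le_sq_mul_sq s x y
  have hX : 0 ≤ ∑ i ∈ s, x i ^ 2 := Finset.sum_nonneg fun i _ => sq_nonneg _
  have hy₀ : y₀ = 0 := by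
    rw [← hxy] at hcs
    have : (x₀ ^ 2 - ∑ i ∈ s, x i ^ 2) * y₀ ^ 2 ≤ 0 := by
      nlinarith [mul_le_mul_of_nonneg_left hy hX]
    exact pow_eq_zero_iff two_ne_zero |>.mp <|
      le_antisymm (nonpos_of_mul_nonpos_right this (sub_pos.2 hx)) (sq_nonneg y₀)
  refine ⟨hy₀, fun i hi => pow_eq_zero_iff two_ne_zero |>.mp ?_⟩
  have hY0 : ∑ i ∈ s, y i ^ 2 = 0 :=
    le_antisymm (by simpa [hy₀] using hy) (Finset.sum_nonneg fun i _ => sq_nonneg _)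
  exact (Finset.sum_eq_zero_iff_of_nonneg fun i _ => sq_nonneg (y i)).mp hY0 i hi

section BilinearForm

variable {V : Type*} [AddCommGroup V] [Module ℝ V] {G F : V →ₗ[ℝ] V →ₗ[ℝ] ℝ}

theorem apply_eq_minkowski_of_basis {m : ℕ} (e : Module.Basis (Fin (m + 1)) ℝ V)
    (he : ∀ i j, G (e i) (e j) = if i = j then (if (i : ℕ) = 0 then 1 else -1) else 0)
    (x y : V) :
    G x y = e.repr x 0 * e.repr y 0 - ∑ j : Fin m, e.repr x j.succ * e.repr y j.succ := by
  conv_lhs => rw [← e.sum_repr x, ← e.sum_repr y]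
  simp only [map_sum, map_smul, LinearMap.sum_apply, LinearMap.smul_apply, smul_eq_mul, he]
  simp [Fin.sum_univ_succ, Fin.succ_ne_zero, mul_comm (e.repr y _), sub_eq_add_neg]

theorem neg_of_orthogonal_timelike {n : ℕ} (e : Module.Basis (Fin n) ℝ V)
    (he : ∀ i j, G (e i) (e j) = if i = j then (if (i : ℕ) = 0 then 1 else -1) else 0)
    {T w : V} (hT : 0 < G T T) (hTw : G T w = 0) (hw : w ≠ 0) : G w w < 0 := by
  cases n with
  | zero => simp [show T = 0 from e.ext_elem_iff.2 fun i => i.elim0] at hT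
  | succ m =>
    by_contra! hww
    simp only [apply_eq_minkowski_of_basis e he, ← sq] at hT hTw hww
    obtain ⟨h₀, hs⟩ := eq_zero_of_minkowski_orthogonal (Finset.univ : Finset (Fin m))
      (x₀ := e.repr T 0) (y₀ := e.repr w 0) (x := fun j => e.repr T j.succ)
      (y := fun j => e.repr w j.succ) (by linarith) (by linarith) (by linarith)
    exact hw <| e.ext_elem_iff.2 fun i => by
      cases i using Fin.cases <;> simp [h₀, hs]

theorem nonneg_apply_smul_add_smul (hFs : ∀ v w, F v w = F w v) {n₁ n₂ : V}
    (h₁ : 0 ≤ F n₁ n₁) (h₂ : 0 ≤ F n₂ n₂) (h₁₂ : 0 ≤ F n₁ n₂) {a b : ℝ} (hab : 0 ≤ a * b) :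
    0 ≤ F (a • n₁ + b • n₂) (a • n₁ + b • n₂) := by
  have : F (a • n₁ + b • n₂) (a • n₁ + b • n₂) =
      a ^ 2 * F n₁ n₁ + b ^ 2 * F n₂ n₂ + 2 * (a * b) * F n₁ n₂ := by
    simp only [map_add, map_smul, LinearMap.add_apply, LinearMap.smul_apply, smul_eq_mul,
      hFs n₂ n₁]
    ring
  rw [this]
  positivity

theorem nonneg_apply_of_lorentzian_plane (hGs : ∀ v w, G v w = G w v)
    (hFs : ∀ v w, F v w = F w v) (hnull : ∀ v, G v v = 0 → 0 ≤ F v v) {T w : V}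
    (hT : 0 < G T T) (hw : G w w < 0) (hTw : G T w = 0) (hFT : 0 ≤ F T T) (hFw : F w w ≤ 0)
    {a : ℝ} (ha : 0 < G (a • T + w) (a • T + w)) : 0 ≤ F (a • T + w) (a • T + w) := by
  have hexpand : ∀ B : V →ₗ[ℝ] V →ₗ[ℝ] ℝ, (∀ v w, B v w = B w v) → ∀ s t : ℝ,
      B (T + s • w) (T + t • w) = B T T + (s + t) * B T w + s * t * B w w := by
    intro B hB s t
    simp only [map_add, map_smul, LinearMap.add_apply, LinearMap.smul_apply, smul_eq_mul, hB w T]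
    ring
  obtain ⟨c, hc, hc2⟩ : ∃ c : ℝ, 0 < c ∧ c ^ 2 * -G w w = G T T := by
    have hpos := div_pos hT (neg_pos.2 hw)
    refine ⟨Real.sqrt (G T T / -G w w), Real.sqrt_pos.2 hpos, ?_⟩
    rw [Real.sq_sqrt hpos.le, div_mul_cancel₀ _ (neg_pos.2 hw).ne']
  have hnull' : ∀ s, s ^ 2 = c ^ 2 → 0 ≤ F (T + s • w) (T + s • w) := fun s hs =>
    hnull _ (by rw [hexpand G hGs, hTw, ← sq, hs]; linarith)
  have hF₁₂ : 0 ≤ F (T + c • w) (T + (-c) • w) := by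
    rw [hexpand F hFs]
    nlinarith
  have hdecomp :
      a • T + w = ((a + c⁻¹) / 2) • (T + c • w) + ((a - c⁻¹) / 2) • (T + (-c) • w) := by
    match_scalars <;> field_simp <;> ring
  rw [hdecomp]
  refine nonneg_apply_smul_add_smul hFs (hnull' c rfl) (hnull' (-c) (by ring)) hF₁₂ ?_
  have hGa : G (a • T + w) (a • T + w) = a ^ 2 * G T T + G w w := by
    simp only [map_add, map_smul, LinearMap.add_apply, LinearMap.smul_apply, smul_eq_mul, hTw,
      hGs w T]
    ring
  have hinv : c⁻¹ ^ 2 * G T T = -G w w := by rw [← hc2]; field_simp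
  have : 0 < (a ^ 2 - c⁻¹ ^ 2) * G T T := by rw [sub_mul, hinv]; linarith
  have := pos_of_mul_pos_left this hT.le
  nlinarith

theorem nonneg_on_timelike_of_nonneg_on_null (hGs : ∀ v w, G v w = G w v)
    (hFs : ∀ v w, F v w = F w v) (hnull : ∀ v, G v v = 0 → 0 ≤ F v v) {T : V}
    (hT : 0 < G T T) (hG : ∀ w, G T w = 0 → w ≠ 0 → G w w < 0) (hFT : 0 ≤ F T T)
    (hFperp : ∀ w, G T w = 0 → F w w ≤ 0) {p : V} (hp : 0 < G p p) : 0 ≤ F p p := by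
  set a := G T p / G T T
  have hTw : G T (p - a • T) = 0 := by
    simp only [map_sub, map_smul, smul_eq_mul, a]
    field_simp
    ring
  have hp' : p = a • T + (p - a • T) := by abel
  rcases eq_or_ne (p - a • T) 0 with hw | hw
  · rw [hp', hw, add_zero]
    simp only [map_smul, LinearMap.smul_apply, smul_eq_mul]
    nlinarith [mul_self_nonneg a]
  rw [hp'] at hp ⊢
  exact nonneg_apply_of_lorentzian_plane hGs hFs hnull hT (hG _ hTw hw) hTw hFT (hFperp _ hTw) hp

theorem nonneg_of_forall_pos_quadratic_nonneg {a b c : ℝ}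
    (h : ∀ t > 0, 0 ≤ a + b * t + c * t ^ 2) : 0 ≤ a :=
  ge_of_tendsto (tendsto_nhdsWithin_of_tendsto_nhds
      ((by fun_prop : Continuous fun t : ℝ => a + b * t + c * t ^ 2).tendsto' 0 a (by simp)))
    (eventually_nhdsWithin_of_forall (s := Ioi 0) h)

theorem nonneg_of_null_of_timelike_bound (hGs : ∀ v w, G v w = G w v)
    (hFs : ∀ v w, F v w = F w v) {T : V} (hT : 0 < G T T)
    (hG : ∀ w, G T w = 0 → w ≠ 0 → G w w < 0) {C : ℝ}
    (hC : ∀ q, 0 < G q q → C * G q q ≤ F q q) {p : V} (hp : G p p = 0) : 0 ≤ F p p := by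
  by_cases hb : G T p = 0
  · obtain rfl : p = 0 := by
      by_contra hp0; exact (hG p hb hp0).ne hp
    simp
  set T' := G T p • T
  have hpT' : G p T' = G T p ^ 2 := by
    simp only [T', map_smul, smul_eq_mul, hGs p T]; ring
  have hT'T' : G T' T' = G T p ^ 2 * G T T := by
    simp only [T', map_smul, LinearMap.smul_apply, smul_eq_mul]; ring
  have hexpand : ∀ B : V →ₗ[ℝ] V →ₗ[ℝ] ℝ, (∀ v w, B v w = B w v) → ∀ t : ℝ,
      B (p + t • T') (p + t • T') = B p p + 2 * B p T' * t + B T' T' * t ^ 2 := by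
    intro B hB t
    simp only [map_add, map_smul, LinearMap.add_apply, LinearMap.smul_apply, smul_eq_mul, hB T' p]
    ring
  refine nonneg_of_forall_pos_quadratic_nonneg (b := 2 * F p T' - 2 * C * G T p ^ 2)
    (c := F T' T' - C * G T' T') fun t ht => ?_
  have hq := hC (p + t • T') (by rw [hexpand G hGs, hp, hpT', hT'T']; positivity)
  rw [hexpand G hGs, hexpand F hFs, hp, hpT'] at hq
  linarith

end BilinearForm

section FamilyOfForms

variable {X E : Type*} [TopologicalSpace X] [NormedAddCommGroup E] [NormedSpace ℝ E]

theorem continuousAt_apply_of_continuousAt_diag {G : X → E →ₗ[ℝ] E →ₗ[ℝ] ℝ}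
    (hGs : ∀ z v w, G z v w = G z w v) {z₀ : X}
    (hGc : ∀ w, ContinuousAt (fun q : X × E => G q.1 q.2 q.2) (z₀, w)) (v w : E) :
    ContinuousAt (fun q : X × E => G q.1 v q.2) (z₀, w) := by
  have hpolar : ∀ z w', G z v w' = (G z (v + w') (v + w') - G z v v - G z w' w') / 2 := by
    intro z w'
    simp only [map_add, LinearMap.add_apply, hGs z w' v]
    ring
  have h₁ : ContinuousAt (fun q : X × E => G q.1 (v + q.2) (v + q.2)) (z₀, w) :=
    (hGc (v + w)).comp (x := (z₀, w)) (f := fun q : X × E => (q.1, v + q.2)) (by fun_prop)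
  have h₂ : ContinuousAt (fun q : X × E => G q.1 v v) (z₀, w) :=
    (hGc v).comp (x := (z₀, w)) (f := fun q : X × E => (q.1, v)) (by fun_prop)
  exact (((h₁.sub h₂).sub (hGc w)).div_const 2).congr
    (Eventually.of_forall fun q => (hpolar q.1 q.2).symm)

theorem apply_self_nonpos_of_sphere {B : E →ₗ[ℝ] E →ₗ[ℝ] ℝ} {ℓ : E →ₗ[ℝ] ℝ}
    (h : ∀ u ∈ sphere (0 : E) 1, ℓ u = 0 → B u u < 0) {w : E} (hw : ℓ w = 0) : B w w ≤ 0 := by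
  rcases eq_or_ne w 0 with rfl | hw0
  · simp
  have hu := h (‖w‖⁻¹ • w) (by simp [norm_smul, hw0]) (by simp [hw])
  have hscale : B w w = ‖w‖ ^ 2 * B (‖w‖⁻¹ • w) (‖w‖⁻¹ • w) := by
    simp only [map_smul, LinearMap.smul_apply, smul_eq_mul]
    field_simp
  rw [hscale]
  exact mul_nonpos_of_nonneg_of_nonpos (by positivity) hu.le

variable [FiniteDimensional ℝ E]

theorem exists_add_smul_pos_and_neg_on_orthogonal {G F : E →ₗ[ℝ] E →ₗ[ℝ] ℝ}
    (hGc : Continuous fun w => G w w) (hFc : Continuous fun w => F w w) {T : E}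
    (hT : 0 < G T T) (hG : ∀ w, G T w = 0 → w ≠ 0 → G w w < 0) :
    ∃ K : ℝ, 0 < F T T + K * G T T ∧
      ∀ w ∈ sphere (0 : E) 1, G T w = 0 → F w w + K * G w w < 0 := by
  set S₀ := sphere (0 : E) 1 ∩ {w | G T w = 0}
  have hS₀ : IsCompact S₀ := (isCompact_sphere 0 1).inter_right
    (isClosed_eq (G T).continuous_of_finiteDimensional continuous_const)
  have hGS₀ : ∀ w ∈ S₀, 0 < -G w w := fun w hw =>
    neg_pos.2 <| hG w hw.2 (ne_zero_of_mem_unit_sphere ⟨w, hw.1⟩)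
  obtain ⟨M, hM⟩ := hS₀.bddAbove_image (f := fun w => F w w / -G w w)
    (hFc.continuousOn.div hGc.neg.continuousOn fun w hw => (hGS₀ w hw).ne')
  refine ⟨max M (-F T T / G T T) + 1, ?_, fun w hw hTw => ?_⟩
  · have : -F T T / G T T < max M (-F T T / G T T) + 1 := by
      linarith [le_max_right M (-F T T / G T T)]
    rw [div_lt_iff₀ hT] at this
    linarith
  · have : F w w / -G w w < max M (-F T T / G T T) + 1 := by
      linarith [le_max_left M (-F T T / G T T), hM (mem_image_of_mem _ (⟨hw, hTw⟩ : w ∈ S₀))]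
    rw [div_lt_iff₀ (hGS₀ w ⟨hw, hTw⟩)] at this
    linarith

theorem exists_eventually_timelike_bound {G F : X → E →ₗ[ℝ] E →ₗ[ℝ] ℝ}
    (hGs : ∀ z v w, G z v w = G z w v) (hFs : ∀ z v w, F z v w = F z w v) {z₀ : X}
    (hG : ∀ᶠ z in 𝓝 z₀, ∀ T w, 0 < G z T T → G z T w = 0 → w ≠ 0 → G z w w < 0)
    (hnull : ∀ᶠ z in 𝓝 z₀, ∀ w, G z w w = 0 → 0 ≤ F z w w)
    (hGc : ∀ w, ContinuousAt (fun q : X × E => G q.1 q.2 q.2) (z₀, w))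
    (hFc : ∀ w, ContinuousAt (fun q : X × E => F q.1 q.2 q.2) (z₀, w))
    {T : E} (hT : 0 < G z₀ T T) :
    ∃ C, ∀ᶠ z in 𝓝 z₀, ∀ p, 0 < G z p p → C * G z p p ≤ F z p p := by
  have hslice : ∀ B : X → E →ₗ[ℝ] E →ₗ[ℝ] ℝ,
      (∀ w, ContinuousAt (fun q : X × E => B q.1 q.2 q.2) (z₀, w)) →
      Continuous (fun w => B z₀ w w) ∧ ContinuousAt (fun z => B z T T) z₀ := fun B hB =>
    ⟨continuous_iff_continuousAt.2 fun w => (hB w).comp (f := fun w => (z₀, w)) (by fun_prop),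
      (hB T).comp (f := fun z => (z, T)) (by fun_prop)⟩
  obtain ⟨K, hKT, hKperp⟩ := exists_add_smul_pos_and_neg_on_orthogonal (hslice G hGc).1
    (hslice F hFc).1 hT (hG.self_of_nhds T · hT)
  set B : X → E →ₗ[ℝ] E →ₗ[ℝ] ℝ := fun z => F z + K • G z
  have hB : ∀ z v w, B z v w = F z v w + K * G z v w := fun z v w => rfl
  have hBc : ∀ w, ContinuousAt (fun q : X × E => B q.1 q.2 q.2) (z₀, w) :=
    fun w => (hFc w).add (continuousAt_const.mul (hGc w))
  -- Tube lemma on the sphere: at a unit `w` not orthogonal to `T` at `z₀`, orthogonality fails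
  -- nearby; at the others, `B < 0` persists nearby.
  have hperp : ∀ᶠ z in 𝓝 z₀, ∀ w ∈ sphere (0 : E) 1, G z T w = 0 → B z w w < 0 := by
    refine (isCompact_sphere (0 : E) 1).eventually_forall_of_forall_eventually fun w hw => ?_
    by_cases hTw : G z₀ T w = 0
    · exact ((hBc w).eventually_lt continuousAt_const (hKperp w hw hTw)).mono fun q hq _ => hq
    · exact ((continuousAt_apply_of_continuousAt_diag hGs hGc T w).eventually_ne hTw).mono
        fun q hq h => absurd h hq
  refine ⟨-K, ?_⟩
  filter_upwards [continuousAt_const.eventually_lt (hslice G hGc).2 hT,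
    continuousAt_const.eventually_lt (hslice B hBc).2 hKT, hperp, hG, hnull]
    with z hGT hBT hperp hG hnull p hp
  have := nonneg_on_timelike_of_nonneg_on_null (hGs z)
    (fun v w => by rw [hB, hB, hFs z v w, hGs z v w])
    (fun v hv => by simpa [hB, hv] using hnull v hv) hGT (hG T · hGT) hBT.le
    (fun w hw => apply_self_nonpos_of_sphere (ℓ := G z T) hperp hw) hp
  rw [hB] at this
  linarith

end FamilyOfForms

section VectorBundle

variable {B W : Type*} {V : B → Type*} [TopologicalSpace B] [NormedAddCommGroup W]
  [NormedSpace ℝ W] [TopologicalSpace (TotalSpace W V)] [∀ b, AddCommGroup (V b)]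
  [∀ b, Module ℝ (V b)]

namespace Bundle.Trivialization

variable (e : Trivialization W (π W V)) [e.IsLinear ℝ]

noncomputable def bilinInCoordinates (G : ∀ b, V b →ₗ[ℝ] V b →ₗ[ℝ] ℝ) (b : B) :
    W →ₗ[ℝ] W →ₗ[ℝ] ℝ :=
  (G b).compl₁₂ (e.symmₗ ℝ b) (e.symmₗ ℝ b)

variable {e} {G : ∀ b, V b →ₗ[ℝ] V b →ₗ[ℝ] ℝ}

theorem bilinInCoordinates_linearMapAt {b : B} (hb : b ∈ e.baseSet) (v w : V b) :
    e.bilinInCoordinates G b (e.linearMapAt ℝ b v) (e.linearMapAt ℝ b w) = G b v w := by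
  simp [bilinInCoordinates, e.symmₗ_linearMapAt hb]

theorem continuousAt_bilinInCoordinates
    (hG : Continuous fun v : TotalSpace W V => G v.proj v.2 v.2) {b₀ : B} (hb₀ : b₀ ∈ e.baseSet)
    (w : W) : ContinuousAt (fun q : B × W => e.bilinInCoordinates G q.1 q.2 q.2) (b₀, w) := by
  have hnhds : e.baseSet ×ˢ univ ∈ 𝓝 (b₀, w) :=
    prod_mem_nhds (e.open_baseSet.mem_nhds hb₀) univ_mem
  refine ((hG.comp_continuousOn e.continuousOn_symm).continuousAt hnhds).congr ?_
  filter_upwards [hnhds] with q hq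
  simp [bilinInCoordinates, e.symmₗ_apply hq.1]

end Bundle.Trivialization

open Bundle.Trivialization in
theorem VectorBundle.exists_eventually_timelike_bound [∀ b, TopologicalSpace (V b)]
    [FiberBundle W V] [VectorBundle ℝ W V] [FiniteDimensional ℝ W]
    {G F : ∀ b, V b →ₗ[ℝ] V b →ₗ[ℝ] ℝ}
    (hGs : ∀ b v w, G b v w = G b w v) (hFs : ∀ b v w, F b v w = F b w v)
    (hG : ∀ b (T w : V b), 0 < G b T T → G b T w = 0 → w ≠ 0 → G b w w < 0)
    (hnull : ∀ b (w : V b), G b w w = 0 → 0 ≤ F b w w)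
    (hGc : Continuous fun v : TotalSpace W V => G v.proj v.2 v.2)
    (hFc : Continuous fun v : TotalSpace W V => F v.proj v.2 v.2) {b₀ : B} {T : V b₀}
    (hT : 0 < G b₀ T T) :
    ∃ C, ∀ᶠ b in 𝓝 b₀, ∀ p : V b, 0 < G b p p → C * G b p p ≤ F b p p := by
  set e := trivializationAt W V b₀
  have hb₀ : b₀ ∈ e.baseSet := mem_baseSet_trivializationAt W V b₀
  have hbase : ∀ᶠ b in 𝓝 b₀, b ∈ e.baseSet := e.open_baseSet.mem_nhds hb₀
  obtain ⟨C, hC⟩ := _root_.exists_eventually_timelike_bound (G := e.bilinInCoordinates G)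
    (F := e.bilinInCoordinates F) (fun b v w => hGs b _ _) (fun b v w => hFs b _ _)
    (hbase.mono fun b hb T w hT hTw hw => hG b _ _ hT hTw fun h => hw <| by
      rw [← e.linearMapAt_symmₗ (R := ℝ) hb w, h, map_zero])
    (Eventually.of_forall fun b w => hnull b _)
    (continuousAt_bilinInCoordinates hGc hb₀) (continuousAt_bilinInCoordinates hFc hb₀)
    (T := e.linearMapAt ℝ b₀ T) (by rwa [bilinInCoordinates_linearMapAt hb₀])
  refine ⟨C, ?_⟩
  filter_upwards [hC, hbase] with b hCb hb p hp
  simpa only [bilinInCoordinates_linearMapAt hb] using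
    hCb (e.linearMapAt ℝ b p) (by rwa [bilinInCoordinates_linearMapAt hb])

end VectorBundle

/-- on a smooth Lorentzian manifold of signature (+,-,…,-), a C¹
symmetric (0,2)-tensor field F is nonnegative on all null vectors iff for every
compact Z the infimum of F(p,p)/g(p,p) over timelike p based in Z is finite. -/
theorem stmt18 {n : ℕ} (hn : 1 ≤ n)
    {M : Type*} [TopologicalSpace M] [ChartedSpace (EuclideanSpace ℝ (Fin n)) M]
    [IsManifold (𝓡 n) (⊤ : ℕ∞) M]
    (g F : ∀ z : M, TangentSpace (𝓡 n) z →ₗ[ℝ] TangentSpace (𝓡 n) z →ₗ[ℝ] ℝ)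
    (hgsymm : ∀ z v w, g z v w = g z w v)
    (hFsymm : ∀ z v w, F z v w = F z w v)
    -- g is smooth, and Lorentzian of signature (+,-,…,-):
    (hgsmooth : ContMDiff ((𝓡 n).tangent) 𝓘(ℝ) (⊤ : ℕ∞)
      (fun v : TangentBundle (𝓡 n) M => g v.proj v.2 v.2))
    (hlorentz : ∀ z : M, ∃ e : Module.Basis (Fin n) ℝ (TangentSpace (𝓡 n) z),
      ∀ i j, g z (e i) (e j) =
        if i = j then (if (i : ℕ) = 0 then 1 else -1) else 0)
    -- F is continuously differentiable:
    (hFC1 : ContMDiff ((𝓡 n).tangent) 𝓘(ℝ) 1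
      (fun v : TangentBundle (𝓡 n) M => F v.proj v.2 v.2)) :
    (∀ (z : M) (p : TangentSpace (𝓡 n) z), g z p p = 0 → 0 ≤ F z p p) ↔
      (∀ Z : Set M, IsCompact Z → ∃ C : ℝ, ∀ z ∈ Z,
        ∀ p : TangentSpace (𝓡 n) z, 0 < g z p p → C ≤ F z p p / g z p p) := by
  have hG : ∀ z (T w : TangentSpace (𝓡 n) z), 0 < g z T T → g z T w = 0 → w ≠ 0 →
      g z w w < 0 := fun z T w => by
    obtain ⟨e, he⟩ := hlorentz z
    exact neg_of_orthogonal_timelike e he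
  have htimelike : ∀ z, ∃ T : TangentSpace (𝓡 n) z, 0 < g z T T := fun z => by
    obtain ⟨e, he⟩ := hlorentz z
    exact ⟨e ⟨0, hn⟩, by simp [he]⟩
  constructor
  · intro hnull Z hZ
    obtain ⟨C, hC⟩ := hZ.exists_forall_of_forall_exists_eventually
      (P := fun C z => ∀ p, 0 < g z p p → C * g z p p ≤ F z p p)
      (fun z C C' hCC' hC' p hp => (mul_le_mul_of_nonneg_right hCC' hp.le).trans (hC' p hp))
      fun z _ => (htimelike z).elim fun _ hT => VectorBundle.exists_eventually_timelike_bound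
        hgsymm hFsymm hG hnull hgsmooth.continuous hFC1.continuous hT
    exact ⟨C, fun z hz p hp => (le_div_iff₀ hp).2 (hC z hz p hp)⟩
  · intro hbound z p hp
    obtain ⟨C, hC⟩ := hbound {z} isCompact_singleton
    obtain ⟨T, hT⟩ := htimelike z
    exact nonneg_of_null_of_timelike_bound (hgsymm z) (hFsymm z) hT (hG z T · hT)
      (fun q hq => (le_div_iff₀ hq).1 (hC z rfl q hq)) hp
end
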